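/- arXiv:2208.08313 — 15 statements merged into one kernel-verified Lean document; each statement's English description precedes it below -/
import Mathlib

section
/- The actions of the groups on the orbits of the hom-sets are free: for all g_1, g_2 ∈ G_1 and every element z ∈ G_1·L, if g_1·z = g_2·z then g_1 = g_2; likewise the right action of G_1 on R·G_1 is free (z·g_1 = z·g_2 implies g_1 = g_2 for z ∈ R·G_1), the right action of G_2 on L·G_2 is free, and the left action of G_2 on G_2·R is free. -/
open CategoryTheory

/-- A *grouplike* structure on the endomorphism monoid of an object `X` of a category:
the underlying set of `X ⟶ X` is the disjoint union of a group `G` (with identity `e 0`)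
and idempotents `e 1, …, e k`, where `e i ≫ e j = e j ≫ e i = e i` for `i ≤ j`,
each `e i` acts as identity on elements of `G`, and `e (Fin.last k)` is the identity
of the monoid.  Composition is written left-to-right (`≫`). -/
structure GrouplikeEnd {C : Type*} [Category C] (X : C) (k : ℕ) where
  G : Set (X ⟶ X)
  e : Fin (k + 1) → (X ⟶ X)
  mul_mem : ∀ g ∈ G, ∀ g' ∈ G, g ≫ g' ∈ G
  e0_mem : e 0 ∈ G
  e0_comp : ∀ g ∈ G, e 0 ≫ g = g
  comp_e0 : ∀ g ∈ G, g ≫ e 0 = g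
  exists_inv : ∀ g ∈ G, ∃ g' ∈ G, g ≫ g' = e 0 ∧ g' ≫ g = e 0
  idem_comp_mem : ∀ i : Fin (k + 1), ∀ g ∈ G, e i ≫ g = g ∧ g ≫ e i = g
  idem_comp_idem : ∀ i j : Fin (k + 1), i ≤ j → e i ≫ e j = e i ∧ e j ≫ e i = e i
  cover : ∀ m : X ⟶ X, m ∈ G ∨ ∃ i : Fin (k + 1), i ≠ 0 ∧ m = e i
  not_mem_G : ∀ i : Fin (k + 1), i ≠ 0 → e i ∉ G
  e_injective : Function.Injective e
  e_last_eq_id : e (Fin.last k) = 𝟙 X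

/-- Right cancellation: `g₁ ≫ m = g₂ ≫ m` with `g₁, g₂ ∈ G` implies `g₁ = g₂`. -/
lemma GrouplikeEnd.cancel_right {C : Type*} [Category C] {X : C} {k : ℕ}
    (GX : GrouplikeEnd X k) {g₁ g₂ : X ⟶ X} (h₁ : g₁ ∈ GX.G) (h₂ : g₂ ∈ GX.G)
    (m : X ⟶ X) (h : g₁ ≫ m = g₂ ≫ m) : g₁ = g₂ := by
  rcases GX.cover m with hm | ⟨i, hi0, rfl⟩
  · obtain ⟨m', hm', hmm', _⟩ := GX.exists_inv m hm
    calc g₁ = g₁ ≫ GX.e 0 := (GX.comp_e0 g₁ h₁).symm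
    _ = g₁ ≫ (m ≫ m') := by rw [hmm']
    _ = (g₁ ≫ m) ≫ m' := by rw [Category.assoc]
    _ = (g₂ ≫ m) ≫ m' := by rw [h]
    _ = g₂ ≫ (m ≫ m') := by rw [Category.assoc]
    _ = g₂ ≫ GX.e 0 := by rw [hmm']
    _ = g₂ := GX.comp_e0 g₂ h₂
  · rw [(GX.idem_comp_mem i g₁ h₁).2, (GX.idem_comp_mem i g₂ h₂).2] at h
    exact h

/-- Left cancellation: `m ≫ g₁ = m ≫ g₂` with `g₁, g₂ ∈ G` implies `g₁ = g₂`. -/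
lemma GrouplikeEnd.cancel_left {C : Type*} [Category C] {X : C} {k : ℕ}
    (GX : GrouplikeEnd X k) {g₁ g₂ : X ⟶ X} (h₁ : g₁ ∈ GX.G) (h₂ : g₂ ∈ GX.G)
    (m : X ⟶ X) (h : m ≫ g₁ = m ≫ g₂) : g₁ = g₂ := by
  rcases GX.cover m with hm | ⟨i, hi0, rfl⟩
  · obtain ⟨m', hm', _, hm'm⟩ := GX.exists_inv m hm
    calc g₁ = GX.e 0 ≫ g₁ := (GX.e0_comp g₁ h₁).symm
    _ = (m' ≫ m) ≫ g₁ := by rw [hm'm]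
    _ = m' ≫ (m ≫ g₁) := by rw [Category.assoc]
    _ = m' ≫ (m ≫ g₂) := by rw [h]
    _ = (m' ≫ m) ≫ g₂ := by rw [Category.assoc]
    _ = GX.e 0 ≫ g₂ := by rw [hm'm]
    _ = g₂ := GX.e0_comp g₂ h₂
  · rw [(GX.idem_comp_mem i g₁ h₁).1, (GX.idem_comp_mem i g₂ h₂).1] at h
    exact h

/-- the group actions on the orbits of the hom-sets are free. -/
theorem stmt_0 {C : Type*} [Category C] (X Y : C) (k₁ k₂ : ℕ)
    [Finite (X ⟶ X)] [Finite (X ⟶ Y)] [Finite (Y ⟶ X)] [Finite (Y ⟶ Y)]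
    (hL : Nonempty (X ⟶ Y)) (hR : Nonempty (Y ⟶ X))
    (GX : GrouplikeEnd X k₁) (GY : GrouplikeEnd Y k₂) :
    (∀ g₁ ∈ GX.G, ∀ g₂ ∈ GX.G, ∀ z : X ⟶ Y,
        (∃ g ∈ GX.G, ∃ x : X ⟶ Y, z = g ≫ x) → g₁ ≫ z = g₂ ≫ z → g₁ = g₂) ∧
    (∀ g₁ ∈ GX.G, ∀ g₂ ∈ GX.G, ∀ z : Y ⟶ X,
        (∃ g ∈ GX.G, ∃ y : Y ⟶ X, z = y ≫ g) → z ≫ g₁ = z ≫ g₂ → g₁ = g₂) ∧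
    (∀ h₁ ∈ GY.G, ∀ h₂ ∈ GY.G, ∀ z : X ⟶ Y,
        (∃ h ∈ GY.G, ∃ x : X ⟶ Y, z = x ≫ h) → z ≫ h₁ = z ≫ h₂ → h₁ = h₂) ∧
    (∀ h₁ ∈ GY.G, ∀ h₂ ∈ GY.G, ∀ z : Y ⟶ X,
        (∃ h ∈ GY.G, ∃ y : Y ⟶ X, z = h ≫ y) → h₁ ≫ z = h₂ ≫ z → h₁ = h₂) := by
  obtain ⟨y⟩ := hR
  obtain ⟨x⟩ := hL
  refine ⟨?_, ?_, ?_, ?_⟩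
  · intro g₁ hg₁ g₂ hg₂ z _ hz
    exact GX.cancel_right hg₁ hg₂ (z ≫ y) (by rw [← Category.assoc, hz, Category.assoc])
  · intro g₁ hg₁ g₂ hg₂ z _ hz
    exact GX.cancel_left hg₁ hg₂ (x ≫ z) (by rw [Category.assoc, hz, Category.assoc])
  · intro h₁ hh₁ h₂ hh₂ z _ hz
    exact GY.cancel_left hh₁ hh₂ (y ≫ z) (by rw [Category.assoc, hz, Category.assoc])
  · intro h₁ hh₁ h₂ hh₂ z _ hz
    exact GY.cancel_right hh₁ hh₂ (z ≫ x) (by rw [← Category.assoc, hz, Category.assoc])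
end

section
/- For every x ∈ L there exists at least one y ∈ R such that x·y = e_0 (the group identity of G_1), and for every y ∈ R there exists at least one x ∈ L such that y·x = f_0 (the group identity of G_2). -/
open CategoryTheory

/-- every element of `L` has a right inverse hitting the group identity `e 0`,
and every element of `R` has a right inverse hitting the group identity `f 0`. -/
theorem stmt_1 {C : Type*} [Category C] (X Y : C) (k₁ k₂ : ℕ)
    [Finite (X ⟶ X)] [Finite (X ⟶ Y)] [Finite (Y ⟶ X)] [Finite (Y ⟶ Y)]
    (hL : Nonempty (X ⟶ Y)) (hR : Nonempty (Y ⟶ X))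
    (GX : GrouplikeEnd X k₁) (GY : GrouplikeEnd Y k₂) :
    (∀ x : X ⟶ Y, ∃ y : Y ⟶ X, x ≫ y = GX.e 0) ∧
    (∀ y : Y ⟶ X, ∃ x : X ⟶ Y, y ≫ x = GY.e 0) := by
  constructor
  · intro x
    obtain ⟨y₀⟩ := hR
    rcases GX.cover (x ≫ y₀) with hu | ⟨i, _, hi⟩
    · obtain ⟨g', hg', hgg', _⟩ := GX.exists_inv _ hu
      exact ⟨y₀ ≫ g', by rw [← Category.assoc, hgg']⟩
    · exact ⟨y₀ ≫ GX.e 0, by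
        rw [← Category.assoc, hi, (GX.idem_comp_mem i _ GX.e0_mem).1]⟩
  · intro y
    obtain ⟨x₀⟩ := hL
    rcases GY.cover (y ≫ x₀) with hu | ⟨i, _, hi⟩
    · obtain ⟨g', hg', hgg', _⟩ := GY.exists_inv _ hu
      exact ⟨x₀ ≫ g', by rw [← Category.assoc, hgg']⟩
    · exact ⟨x₀ ≫ GY.e 0, by
        rw [← Category.assoc, hi, (GY.idem_comp_mem i _ GY.e0_mem).1]⟩
end

section
/- The groups G_1 and G_2 have the same cardinality, and for every x ∈ L the left and right orbits of x coincide: G_1·x = x·G_2. -/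
open CategoryTheory

namespace GLAux

variable {C : Type*} [Category C]

lemma e0_comp_e (S : GrouplikeEnd (C := C) X k) (i : Fin (k+1)) :
    S.e 0 ≫ S.e i = S.e 0 := (S.idem_comp_idem 0 i (Fin.zero_le i)).1

lemma e_comp_e0 (S : GrouplikeEnd (C := C) X k) (i : Fin (k+1)) :
    S.e i ≫ S.e 0 = S.e 0 := (S.idem_comp_idem 0 i (Fin.zero_le i)).2

lemma idem_mem_eq_e0 {X : C} {k : ℕ} (S : GrouplikeEnd X k) {m : X ⟶ X}
    (hm : m ∈ S.G) (h : m ≫ m = m) : m = S.e 0 := by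
  obtain ⟨m', hm', h1, h2⟩ := S.exists_inv m hm
  calc m = m ≫ S.e 0 := (S.comp_e0 m hm).symm
    _ = m ≫ m ≫ m' := by rw [h1]
    _ = (m ≫ m) ≫ m' := by rw [Category.assoc]
    _ = m ≫ m' := by rw [h]
    _ = S.e 0 := h1

lemma cancel_of_mem {X : C} {k : ℕ} (S : GrouplikeEnd X k) {g g' : X ⟶ X}
    (hg : g ∈ S.G) (hg' : g' ∈ S.G) (m : X ⟶ X) (h : g ≫ m = g' ≫ m) : g = g' := by
  rcases S.cover m with hm | ⟨i, hi, rfl⟩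
  · obtain ⟨m', hm', h1, h2⟩ := S.exists_inv m hm
    calc g = g ≫ S.e 0 := (S.comp_e0 g hg).symm
      _ = g ≫ m ≫ m' := by rw [h1]
      _ = (g ≫ m) ≫ m' := by rw [Category.assoc]
      _ = (g' ≫ m) ≫ m' := by rw [h]
      _ = g' ≫ m ≫ m' := by rw [Category.assoc]
      _ = g' ≫ S.e 0 := by rw [h1]
      _ = g' := S.comp_e0 g' hg'
  · rwa [(S.idem_comp_mem i g hg).2, (S.idem_comp_mem i g' hg').2] at h

lemma lcancel {X Y : C} {k₁ : ℕ} (hR : Nonempty (Y ⟶ X)) (GX : GrouplikeEnd X k₁)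
    {g g' : X ⟶ X} (hg : g ∈ GX.G) (hg' : g' ∈ GX.G) (x : X ⟶ Y)
    (h : g ≫ x = g' ≫ x) : g = g' := by
  obtain ⟨y⟩ := hR
  refine cancel_of_mem GX hg hg' (x ≫ y) ?_
  calc g ≫ x ≫ y = (g ≫ x) ≫ y := by rw [Category.assoc]
    _ = (g' ≫ x) ≫ y := by rw [h]
    _ = g' ≫ x ≫ y := by rw [Category.assoc]

lemma exists_y {X Y : C} {k₁ : ℕ} (hR : Nonempty (Y ⟶ X)) (GX : GrouplikeEnd X k₁)
    (x : X ⟶ Y) : ∃ y : Y ⟶ X, x ≫ y = GX.e 0 := by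
  obtain ⟨y₀⟩ := hR
  rcases GX.cover (x ≫ y₀) with hm | ⟨i, hi, hm⟩
  · obtain ⟨m', hm', h1, h2⟩ := GX.exists_inv _ hm
    exact ⟨y₀ ≫ m', by rw [← Category.assoc, h1]⟩
  · exact ⟨y₀ ≫ GX.e 0, by rw [← Category.assoc, hm, e_comp_e0]⟩

lemma exists_good_y {X Y : C} {k₁ k₂ : ℕ} (hR : Nonempty (Y ⟶ X))
    (GX : GrouplikeEnd X k₁) (GY : GrouplikeEnd Y k₂) (x : X ⟶ Y) :
    ∃ y : Y ⟶ X, x ≫ y = GX.e 0 ∧ y ≫ GX.e 0 ≫ x ∈ GY.G := by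
  obtain ⟨y₁, hy₁⟩ := exists_y hR GX x
  rcases GY.cover (y₁ ≫ GX.e 0 ≫ x) with h | ⟨j, hj, hqj⟩
  · exact ⟨y₁, hy₁, h⟩
  · -- n := y₁ ≫ x is an idempotent e i with i ≠ 0
    have hnn : (y₁ ≫ x) ≫ (y₁ ≫ x) = y₁ ≫ GX.e 0 ≫ x := by
      rw [Category.assoc, ← Category.assoc x y₁ x, hy₁]
    have hnG : (y₁ ≫ x) ∉ GY.G := by
      intro h
      have := GY.mul_mem _ h _ h
      rw [hnn, hqj] at this
      exact GY.not_mem_G j hj this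
    rcases GY.cover (y₁ ≫ x) with h | ⟨i, hi, hni⟩
    · exact absurd h hnG
    · have he0x : GX.e 0 ≫ x = x ≫ GY.e i := by
        rw [← hy₁, Category.assoc, hni]
      -- m := x ≫ GY.e 0 ≫ y₁ is idempotent and fixed by GX.e 0, hence = GX.e 0
      have hmm : (x ≫ GY.e 0 ≫ y₁) ≫ (x ≫ GY.e 0 ≫ y₁) = x ≫ GY.e 0 ≫ y₁ := by
        calc (x ≫ GY.e 0 ≫ y₁) ≫ (x ≫ GY.e 0 ≫ y₁)
            = x ≫ GY.e 0 ≫ (y₁ ≫ x) ≫ GY.e 0 ≫ y₁ := by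
              simp only [Category.assoc]
          _ = x ≫ GY.e 0 ≫ GY.e i ≫ GY.e 0 ≫ y₁ := by rw [hni]
          _ = x ≫ GY.e 0 ≫ GY.e 0 ≫ y₁ := by
              rw [← Category.assoc (GY.e i), e_comp_e0]
          _ = x ≫ GY.e 0 ≫ y₁ := by
              rw [← Category.assoc (GY.e 0) (GY.e 0), GY.e0_comp _ GY.e0_mem]
      have he0m : GX.e 0 ≫ (x ≫ GY.e 0 ≫ y₁) = x ≫ GY.e 0 ≫ y₁ := by
        calc GX.e 0 ≫ (x ≫ GY.e 0 ≫ y₁) = (GX.e 0 ≫ x) ≫ GY.e 0 ≫ y₁ := by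
              simp only [Category.assoc]
          _ = (x ≫ GY.e i) ≫ GY.e 0 ≫ y₁ := by rw [he0x]
          _ = x ≫ (GY.e i ≫ GY.e 0) ≫ y₁ := by simp only [Category.assoc]
          _ = x ≫ GY.e 0 ≫ y₁ := by rw [e_comp_e0]
      have hm0 : x ≫ GY.e 0 ≫ y₁ = GX.e 0 := by
        rcases GX.cover (x ≫ GY.e 0 ≫ y₁) with h | ⟨l, hl, hml⟩
        · exact idem_mem_eq_e0 GX h hmm
        · exfalso
          rw [hml, e0_comp_e] at he0m
          exact hl (GX.e_injective he0m).symm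
      refine ⟨GY.e 0 ≫ y₁, hm0, ?_⟩
      have : (GY.e 0 ≫ y₁) ≫ GX.e 0 ≫ x = GY.e 0 := by
        calc (GY.e 0 ≫ y₁) ≫ GX.e 0 ≫ x = GY.e 0 ≫ (y₁ ≫ GX.e 0 ≫ x) := by
              simp only [Category.assoc]
          _ = GY.e 0 ≫ GY.e j := by rw [hqj]
          _ = GY.e 0 := e0_comp_e GY j
      rw [this]; exact GY.e0_mem

lemma key {X Y : C} {k₁ k₂ : ℕ} (hR : Nonempty (Y ⟶ X))
    (GX : GrouplikeEnd X k₁) (GY : GrouplikeEnd Y k₂) (x : X ⟶ Y) :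
    ∀ g ∈ GX.G, ∃ h ∈ GY.G, g ≫ x = x ≫ h := by
  obtain ⟨y, hy, hqG⟩ := exists_good_y hR GX GY x
  -- general facts
  have hx : ∀ a : X ⟶ X, a ∈ GX.G → x ≫ (y ≫ a ≫ x) = a ≫ x := by
    intro a ha
    calc x ≫ (y ≫ a ≫ x) = (x ≫ y) ≫ a ≫ x := by simp only [Category.assoc]
      _ = GX.e 0 ≫ a ≫ x := by rw [hy]
      _ = (GX.e 0 ≫ a) ≫ x := by simp only [Category.assoc]
      _ = a ≫ x := by rw [GX.e0_comp a ha]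
  have hmul : ∀ a b : X ⟶ X, a ∈ GX.G →
      (y ≫ a ≫ x) ≫ (y ≫ b ≫ x) = y ≫ (a ≫ b) ≫ x := by
    intro a b ha
    calc (y ≫ a ≫ x) ≫ (y ≫ b ≫ x) = y ≫ a ≫ (x ≫ y) ≫ b ≫ x := by
          simp only [Category.assoc]
      _ = y ≫ a ≫ GX.e 0 ≫ b ≫ x := by rw [hy]
      _ = y ≫ (a ≫ GX.e 0) ≫ b ≫ x := by simp only [Category.assoc]
      _ = y ≫ a ≫ b ≫ x := by rw [GX.comp_e0 a ha]
      _ = y ≫ (a ≫ b) ≫ x := by simp only [Category.assoc]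
  have hq2 : (y ≫ GX.e 0 ≫ x) ≫ (y ≫ GX.e 0 ≫ x) = y ≫ GX.e 0 ≫ x := by
    rw [hmul _ _ GX.e0_mem, GX.comp_e0 _ GX.e0_mem]
  have hq0 : y ≫ GX.e 0 ≫ x = GY.e 0 := idem_mem_eq_e0 GY hqG hq2
  intro g hg
  obtain ⟨g', hg', hgg', hg'g⟩ := GX.exists_inv g hg
  have hhh' : (y ≫ g ≫ x) ≫ (y ≫ g' ≫ x) = GY.e 0 := by
    rw [hmul _ _ hg, hgg', hq0]
  refine ⟨y ≫ g ≫ x, ?_, (hx g hg).symm⟩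
  rcases GY.cover (y ≫ g ≫ x) with hh | ⟨m, hm, hhm⟩
  · exact hh
  · exfalso
    rcases GY.cover (y ≫ g' ≫ x) with hh' | ⟨l, hl, hh'l⟩
    · -- then y ≫ g' ≫ x = GY.e 0, so g' ≫ x = GX.e 0 ≫ x, so g' = e 0, so g = e 0
      have h1 : y ≫ g' ≫ x = GY.e 0 := by
        rw [hhm, (GY.idem_comp_mem m _ hh').1] at hhh'; exact hhh'
      have h2 : g' ≫ x = GX.e 0 ≫ x := by
        rw [← hx g' hg', ← hx (GX.e 0) GX.e0_mem, h1, hq0]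
      have h3 : g' = GX.e 0 := lcancel hR GX hg' GX.e0_mem x h2
      have h4 : g = GX.e 0 := by
        rw [h3] at hgg'; rw [← GX.comp_e0 g hg]; exact hgg'
      rw [h4] at hhm
      rw [hq0] at hhm
      exact hm (GY.e_injective hhm).symm
    · rw [hhm, hh'l] at hhh'
      rcases le_total m l with hml | hlm
      · rw [(GY.idem_comp_idem m l hml).1] at hhh'
        exact hm (GY.e_injective hhh')
      · rw [(GY.idem_comp_idem l m hlm).2] at hhh'
        exact hl (GY.e_injective hhh')

/-- Transfer a grouplike structure to the opposite category. -/
def opGrouplike {X : C} {k : ℕ} (S : GrouplikeEnd X k) :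
    GrouplikeEnd (Opposite.op X) k where
  G := {f | f.unop ∈ S.G}
  e i := (S.e i).op
  mul_mem g hg g' hg' := S.mul_mem _ hg' _ hg
  e0_mem := S.e0_mem
  e0_comp g hg := Quiver.Hom.unop_inj (S.comp_e0 g.unop hg)
  comp_e0 g hg := Quiver.Hom.unop_inj (S.e0_comp g.unop hg)
  exists_inv g hg := by
    obtain ⟨g', hg', h1, h2⟩ := S.exists_inv g.unop hg
    exact ⟨g'.op, hg', Quiver.Hom.unop_inj h2, Quiver.Hom.unop_inj h1⟩
  idem_comp_mem i g hg :=
    ⟨Quiver.Hom.unop_inj (S.idem_comp_mem i g.unop hg).2,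
     Quiver.Hom.unop_inj (S.idem_comp_mem i g.unop hg).1⟩
  idem_comp_idem i j h :=
    ⟨Quiver.Hom.unop_inj (S.idem_comp_idem i j h).2,
     Quiver.Hom.unop_inj (S.idem_comp_idem i j h).1⟩
  cover m := by
    rcases S.cover m.unop with h | ⟨i, hi, hm⟩
    · exact Or.inl h
    · exact Or.inr ⟨i, hi, Quiver.Hom.unop_inj hm⟩
  not_mem_G i hi h := S.not_mem_G i hi h
  e_injective i j h := S.e_injective (Quiver.Hom.op_inj h)
  e_last_eq_id := by show (S.e (Fin.last k)).op = _; rw [S.e_last_eq_id]; rfl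

lemma key_rev {X Y : C} {k₁ k₂ : ℕ} (hR : Nonempty (Y ⟶ X))
    (GX : GrouplikeEnd X k₁) (GY : GrouplikeEnd Y k₂) (x : X ⟶ Y) :
    ∀ h ∈ GY.G, ∃ g ∈ GX.G, x ≫ h = g ≫ x := by
  intro h hh
  have hR' : Nonempty (Opposite.op X ⟶ Opposite.op Y) := ⟨hR.some.op⟩
  obtain ⟨g, hg, hgx⟩ := key hR' (opGrouplike GY) (opGrouplike GX) x.op h.op hh
  refine ⟨g.unop, hg, ?_⟩
  simpa using congrArg Quiver.Hom.unop hgx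

lemma rcancel {X Y : C} {k₂ : ℕ} (hR : Nonempty (Y ⟶ X)) (GY : GrouplikeEnd Y k₂)
    {h h' : Y ⟶ Y} (hh : h ∈ GY.G) (hh' : h' ∈ GY.G) (x : X ⟶ Y)
    (heq : x ≫ h = x ≫ h') : h = h' := by
  have hR' : Nonempty (Opposite.op X ⟶ Opposite.op Y) := ⟨hR.some.op⟩
  have e2 : h.op ≫ x.op = h'.op ≫ x.op :=
    Quiver.Hom.unop_inj (by simpa using heq)
  have := lcancel hR' (opGrouplike GY) (g := h.op) (g' := h'.op) hh hh' x.op e2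
  exact Quiver.Hom.op_inj this

end GLAux

/-- `G₁` and `G₂` have the same cardinality, and for every `x ∈ L`
the left and right orbits coincide: `G₁·x = x·G₂`. -/
theorem stmt_3 {C : Type*} [Category C] (X Y : C) (k₁ k₂ : ℕ)
    [Finite (X ⟶ X)] [Finite (X ⟶ Y)] [Finite (Y ⟶ X)] [Finite (Y ⟶ Y)]
    (hL : Nonempty (X ⟶ Y)) (hR : Nonempty (Y ⟶ X))
    (GX : GrouplikeEnd X k₁) (GY : GrouplikeEnd Y k₂) :
    Nat.card GX.G = Nat.card GY.G ∧
    ∀ x : X ⟶ Y,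
      {z : X ⟶ Y | ∃ g ∈ GX.G, z = g ≫ x} = {z : X ⟶ Y | ∃ h ∈ GY.G, z = x ≫ h} := by
  constructor
  · obtain ⟨x⟩ := hL
    have H1 : ∀ g : GX.G, ∃ h : GY.G, (g : X ⟶ X) ≫ x = x ≫ (h : Y ⟶ Y) := by
      intro g
      obtain ⟨h, hh, he⟩ := GLAux.key hR GX GY x g g.2
      exact ⟨⟨h, hh⟩, he⟩
    choose f hf using H1
    have hfinj : Function.Injective f := by
      intro a b hab
      have h1 : (a : X ⟶ X) ≫ x = (b : X ⟶ X) ≫ x := by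
        rw [hf a, hf b, hab]
      exact Subtype.ext (GLAux.lcancel hR GX a.2 b.2 x h1)
    have H2 : ∀ h : GY.G, ∃ g : GX.G, x ≫ (h : Y ⟶ Y) = (g : X ⟶ X) ≫ x := by
      intro h
      obtain ⟨g, hg, he⟩ := GLAux.key_rev hR GX GY x h h.2
      exact ⟨⟨g, hg⟩, he⟩
    choose f' hf' using H2
    have hf'inj : Function.Injective f' := by
      intro a b hab
      have h1 : x ≫ (a : Y ⟶ Y) = x ≫ (b : Y ⟶ Y) := by
        rw [hf' a, hf' b, hab]
      exact Subtype.ext (GLAux.rcancel hR GY a.2 b.2 x h1)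
    exact le_antisymm (Nat.card_le_card_of_injective f hfinj)
      (Nat.card_le_card_of_injective f' hf'inj)
  · intro x
    ext z
    simp only [Set.mem_setOf_eq]
    constructor
    · rintro ⟨g, hg, rfl⟩
      obtain ⟨h, hh, he⟩ := GLAux.key hR GX GY x g hg
      exact ⟨h, hh, he⟩
    · rintro ⟨h, hh, rfl⟩
      obtain ⟨g, hg, he⟩ := GLAux.key_rev hR GX GY x h hh
      exact ⟨g, hg, he⟩
end

section
/- All elements of L lie in a single orbit under the left action of G_1: for all x, y ∈ L one has G_1·x = G_1·y. -/
open CategoryTheory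

namespace GrouplikeEnd

variable {C : Type*} [Category C] {X : C} {k : ℕ}

/-- `n`-th power of an endomorphism, with `a ^ 0 := e 0`. -/
def gpow (E : GrouplikeEnd X k) (a : X ⟶ X) : ℕ → (X ⟶ X)
  | 0 => E.e 0
  | n + 1 => E.gpow a n ≫ a

lemma gpow_mem (E : GrouplikeEnd X k) {a : X ⟶ X} (ha : a ∈ E.G) :
    ∀ n, E.gpow a n ∈ E.G
  | 0 => E.e0_mem
  | n + 1 => E.mul_mem _ (E.gpow_mem ha n) _ ha

lemma gpow_add (E : GrouplikeEnd X k) {a : X ⟶ X} (ha : a ∈ E.G) (m : ℕ) :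
    ∀ n, E.gpow a (m + n) = E.gpow a m ≫ E.gpow a n
  | 0 => by
      show E.gpow a m = E.gpow a m ≫ E.e 0
      rw [E.comp_e0 _ (E.gpow_mem ha m)]
  | n + 1 => by
      show E.gpow a (m + n) ≫ a = E.gpow a m ≫ (E.gpow a n ≫ a)
      rw [E.gpow_add ha m n, Category.assoc]

lemma gpow_mul_e0 (E : GrouplikeEnd X k) {a : X ⟶ X} (ha : a ∈ E.G) {n : ℕ}
    (hn : E.gpow a n = E.e 0) : ∀ m, E.gpow a (n * m) = E.e 0
  | 0 => rfl
  | m + 1 => by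
      rw [Nat.mul_succ, E.gpow_add ha, E.gpow_mul_e0 ha hn m, hn,
        E.comp_e0 _ E.e0_mem]

lemma exists_gpow_eq_e0 [Finite (X ⟶ X)] (E : GrouplikeEnd X k) {a : X ⟶ X}
    (ha : a ∈ E.G) : ∃ n, 0 < n ∧ E.gpow a n = E.e 0 := by
  have key : ∀ p q : ℕ, p < q → E.gpow a p = E.gpow a q →
      ∃ n, 0 < n ∧ E.gpow a n = E.e 0 := by
    intro p q hlt heq
    obtain ⟨u, hu, -, hu2⟩ := E.exists_inv _ (E.gpow_mem ha p)
    refine ⟨q - p, by omega, ?_⟩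
    have hq : q = p + (q - p) := by omega
    have h1 : E.gpow a (p + (q - p)) = E.gpow a p ≫ E.gpow a (q - p) :=
      E.gpow_add ha p (q - p)
    rw [← hq] at h1
    calc E.gpow a (q - p) = E.e 0 ≫ E.gpow a (q - p) :=
          (E.e0_comp _ (E.gpow_mem ha _)).symm
      _ = (u ≫ E.gpow a p) ≫ E.gpow a (q - p) := by rw [hu2]
      _ = u ≫ (E.gpow a p ≫ E.gpow a (q - p)) := Category.assoc _ _ _
      _ = u ≫ E.gpow a q := by rw [← h1]
      _ = u ≫ E.gpow a p := by rw [← heq]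
      _ = E.e 0 := hu2
  obtain ⟨p, q, hpq, heq⟩ :=
    Finite.exists_ne_map_eq_of_infinite (fun n : ℕ => E.gpow a n)
  rcases hpq.lt_or_gt with h | h
  · exact key p q h heq
  · exact key q p h heq.symm

lemma comp_e0_mem (E : GrouplikeEnd X k) (m : X ⟶ X) : m ≫ E.e 0 ∈ E.G := by
  rcases E.cover m with hm | ⟨i, -, rfl⟩
  · rw [E.comp_e0 m hm]; exact hm
  · rw [(E.idem_comp_idem 0 i i.zero_le).2]; exact E.e0_mem

lemma e0_comp_mem (E : GrouplikeEnd X k) (m : X ⟶ X) : E.e 0 ≫ m ∈ E.G := by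
  rcases E.cover m with hm | ⟨i, -, rfl⟩
  · rw [E.e0_comp m hm]; exact hm
  · rw [(E.idem_comp_idem 0 i i.zero_le).1]; exact E.e0_mem

end GrouplikeEnd

/-- all elements of `L` lie in a single orbit under the left action of `G₁`. -/
theorem stmt_4 {C : Type*} [Category C] (X Y : C) (k₁ k₂ : ℕ)
    [Finite (X ⟶ X)] [Finite (X ⟶ Y)] [Finite (Y ⟶ X)] [Finite (Y ⟶ Y)]
    (hL : Nonempty (X ⟶ Y)) (hR : Nonempty (Y ⟶ X))
    (GX : GrouplikeEnd X k₁) (GY : GrouplikeEnd Y k₂) :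
    ∀ x y : X ⟶ Y,
      {z : X ⟶ Y | ∃ g ∈ GX.G, z = g ≫ x} = {z : X ⟶ Y | ∃ g ∈ GX.G, z = g ≫ y} := by
  obtain ⟨r⟩ := hR
  set r₂ : Y ⟶ X := GY.e 0 ≫ r ≫ GX.e 0 with hr2
  have hA : ∀ z : X ⟶ Y, z ≫ r₂ ∈ GX.G := by
    intro z
    have h : z ≫ r₂ = (z ≫ GY.e 0 ≫ r) ≫ GX.e 0 := by simp [hr2]
    rw [h]; exact GX.comp_e0_mem _
  have hB : ∀ z : X ⟶ Y, r₂ ≫ z ∈ GY.G := by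
    intro z
    have h : r₂ ≫ z = GY.e 0 ≫ ((r ≫ GX.e 0) ≫ z) := by simp [hr2]
    rw [h]; exact GY.e0_comp_mem _
  -- key intertwining identity: `e₀ ≫ z = z ≫ f₀` for every `z : X ⟶ Y`
  have star : ∀ z : X ⟶ Y, GX.e 0 ≫ z = z ≫ GY.e 0 := by
    intro z
    have ha := hA z
    have hb := hB z
    have hab : (z ≫ r₂) ≫ z = z ≫ (r₂ ≫ z) := Category.assoc _ _ _
    have intertwine : ∀ n, GX.gpow (z ≫ r₂) (n + 1) ≫ z
        = z ≫ GY.gpow (r₂ ≫ z) (n + 1) := by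
      intro n
      induction n with
      | zero =>
          show (GX.e 0 ≫ (z ≫ r₂)) ≫ z = z ≫ (GY.e 0 ≫ (r₂ ≫ z))
          rw [GX.e0_comp _ ha, GY.e0_comp _ hb, hab]
      | succ n ih =>
          show (GX.gpow (z ≫ r₂) (n + 1) ≫ (z ≫ r₂)) ≫ z
              = z ≫ (GY.gpow (r₂ ≫ z) (n + 1) ≫ (r₂ ≫ z))
          rw [Category.assoc, hab, ← Category.assoc, ih, Category.assoc,
            Category.assoc]
    obtain ⟨n, hn, hna⟩ := GX.exists_gpow_eq_e0 ha
    obtain ⟨m, hm, hmb⟩ := GY.exists_gpow_eq_e0 hb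
    have hNa : GX.gpow (z ≫ r₂) (n * m) = GX.e 0 := GX.gpow_mul_e0 ha hna m
    have hNb : GY.gpow (r₂ ≫ z) (n * m) = GY.e 0 := by
      rw [Nat.mul_comm]; exact GY.gpow_mul_e0 hb hmb n
    have hnm : 0 < n * m := Nat.mul_pos hn hm
    obtain ⟨N, hN⟩ : ∃ N, n * m = N + 1 := ⟨n * m - 1, by omega⟩
    have h := intertwine N
    rw [← hN, hNa, hNb] at h
    exact h
  -- transfer: we can reach `e₀ ≫ y` from `x` by an element of `G₁`
  have key : ∀ x y : X ⟶ Y, ∃ g ∈ GX.G, g ≫ x = GX.e 0 ≫ y := by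
    intro x y
    have hb := hB x
    obtain ⟨b', hb'G, hbb', hb'b⟩ := GY.exists_inv _ hb
    refine ⟨y ≫ b' ≫ r₂, ?_, ?_⟩
    · have h : y ≫ b' ≫ r₂ = (y ≫ b' ≫ GY.e 0 ≫ r) ≫ GX.e 0 := by simp [hr2]
      rw [h]; exact GX.comp_e0_mem _
    · calc (y ≫ b' ≫ r₂) ≫ x = y ≫ b' ≫ (r₂ ≫ x) := by simp
        _ = y ≫ GY.e 0 := by rw [hb'b]
        _ = GX.e 0 ≫ y := (star y).symm
  have sub : ∀ x y : X ⟶ Y,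
      {z : X ⟶ Y | ∃ g ∈ GX.G, z = g ≫ y} ⊆ {z : X ⟶ Y | ∃ g ∈ GX.G, z = g ≫ x} := by
    intro x y z hz
    obtain ⟨g₁, hg₁, rfl⟩ := hz
    obtain ⟨g, hg, hgx⟩ := key x y
    refine ⟨g₁ ≫ g, GX.mul_mem _ hg₁ _ hg, ?_⟩
    have h : (g₁ ≫ g) ≫ x = g₁ ≫ y := by
      rw [Category.assoc, hgx, ← Category.assoc, GX.comp_e0 _ hg₁]
    exact h.symm
  intro x y
  exact Set.Subset.antisymm (sub y x) (sub x y)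
end

section
/- The groups together with the orbits form a groupoid inside C: (i) the four sets G_1, G_2, G_1·L, G_2·R are closed under composition, i.e. G_1·(G_1·L) ⊆ G_1·L, (G_1·L)·G_2 ⊆ G_1·L, G_2·(G_2·R) ⊆ G_2·R, (G_2·R)·G_1 ⊆ G_2·R; (ii) for all x ∈ G_1·L and y ∈ G_2·R one has x·y ∈ G_1 and y·x ∈ G_2; (iii) every element is invertible: for every x ∈ G_1·L there exists y ∈ G_2·R with x·y = e_0 and y·x = f_0, and for every y ∈ G_2·R there exists x ∈ G_1·L with x·y = e_0 and y·x = f_0. Thus the objects X, Y with morphism sets G_1, G_2, G_1·L, G_2·R and identities e_0, f_0 form a sub-semicategory of C that is a groupoid. -/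
open CategoryTheory

section Aux

variable {C : Type*} [Category C]

/-- iterated composition -/
def cpow {A : C} (t : A ⟶ A) : ℕ → (A ⟶ A)
  | 0 => 𝟙 A
  | n + 1 => cpow t n ≫ t

lemma cpow_add {A : C} (t : A ⟶ A) (m n : ℕ) :
    cpow t (m + n) = cpow t m ≫ cpow t n := by
  induction n with
  | zero => simp [cpow]
  | succ n ih => simp [cpow, ← Nat.add_assoc, ih]

lemma cpow_succ' {A : C} (t : A ⟶ A) (n : ℕ) :
    cpow t (n + 1) = t ≫ cpow t n := by
  have := cpow_add t 1 n
  simpa [cpow, Nat.add_comm] using this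

/-- in a finite hom-monoid, some positive power of every element is idempotent -/
lemma exists_idem_cpow {A : C} [Finite (A ⟶ A)] (t : A ⟶ A) :
    ∃ n, 0 < n ∧ cpow t n ≫ cpow t n = cpow t n := by
  obtain ⟨a, b, hab, h⟩ := Finite.exists_ne_map_eq_of_infinite (fun n : ℕ => cpow t n)
  wlog hlt : a < b generalizing a b
  · exact this b a hab.symm h.symm (by omega)
  set d := b - a with hd
  have hd1 : 0 < d := by omega
  have hstep : ∀ c : ℕ, cpow t (a + c + d) = cpow t (a + c) := by
    intro c
    have h1 : cpow t (a + d) = cpow t a := by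
      have : a + d = b := by omega
      rw [this]; exact h.symm
    calc cpow t (a + c + d) = cpow t (a + d) ≫ cpow t c := by
          rw [← cpow_add]; ring_nf
      _ = cpow t a ≫ cpow t c := by rw [h1]
      _ = cpow t (a + c) := (cpow_add t a c).symm
  have hmul : ∀ j : ℕ, ∀ c : ℕ, cpow t (a + c + j * d) = cpow t (a + c) := by
    intro j
    induction j with
    | zero => intro c; simp
    | succ j ih =>
      intro c
      have : a + c + (j + 1) * d = a + (c + j * d) + d := by ring
      rw [this, hstep, ← Nat.add_assoc, ih]
  set N := (a + 1) * d with hN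
  have haN : a ≤ N := by have := Nat.le_mul_of_pos_right (a + 1) hd1; omega
  refine ⟨N, by positivity, ?_⟩
  rw [← cpow_add]
  have h2 : N + N = a + (N - a) + (a + 1) * d := by omega
  have h3 : N = a + (N - a) := by omega
  rw [h2, hmul (a + 1), ← h3]

/-- idempotents are absorbed by `e 0` -/
lemma idem_absorb {A : C} {k : ℕ} (GA : GrouplikeEnd A k) (m : A ⟶ A)
    (hm : m ≫ m = m) : GA.e 0 ≫ m = GA.e 0 ∧ m ≫ GA.e 0 = GA.e 0 := by
  rcases GA.cover m with hG | ⟨i, _, rfl⟩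
  · -- an idempotent in the group is the identity
    obtain ⟨m', hm', hmm', _⟩ := GA.exists_inv m hG
    have : m = GA.e 0 := by
      calc m = m ≫ GA.e 0 := (GA.comp_e0 m hG).symm
        _ = m ≫ (m ≫ m') := by rw [hmm']
        _ = (m ≫ m) ≫ m' := by simp
        _ = m ≫ m' := by rw [hm]
        _ = GA.e 0 := hmm'
    subst this
    exact ⟨GA.e0_comp _ GA.e0_mem, GA.e0_comp _ GA.e0_mem⟩
  · have := GA.idem_comp_idem 0 i (Fin.zero_le i)
    exact ⟨this.1, this.2⟩

/-- the key invertibility lemma -/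
lemma key_inv {X Y : C} {k₁ k₂ : ℕ} [Finite (Y ⟶ Y)]
    (hR : Nonempty (Y ⟶ X)) (GX : GrouplikeEnd X k₁) (GY : GrouplikeEnd Y k₂)
    (z : X ⟶ Y) (hz : ∃ g ∈ GX.G, ∃ x : X ⟶ Y, z = g ≫ x) :
    ∃ w : Y ⟶ X, (∃ h ∈ GY.G, ∃ y : Y ⟶ X, w = h ≫ y) ∧
      z ≫ w = GX.e 0 ∧ w ≫ z = GY.e 0 := by
  obtain ⟨g, hg, x, rfl⟩ := hz
  obtain ⟨y0⟩ := hR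
  set z := g ≫ x with hzdef
  have he0z : GX.e 0 ≫ z = z := by
    rw [hzdef, ← Category.assoc, GX.e0_comp g hg]
  -- find an idempotent power of y0 ≫ z in C(Y,Y)
  obtain ⟨n, hn, hidem⟩ := exists_idem_cpow (y0 ≫ z)
  obtain ⟨n', rfl⟩ : ∃ n', n = n' + 1 := ⟨n - 1, by omega⟩
  set v0 : Y ⟶ X := cpow (y0 ≫ z) n' ≫ y0 with hv0
  have hv0z : v0 ≫ z = cpow (y0 ≫ z) (n' + 1) := by
    simp [hv0, cpow]
  -- f0 absorbs the idempotent
  have habs := idem_absorb GY _ hidem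
  set v : Y ⟶ X := GY.e 0 ≫ v0 with hv
  have hvz : v ≫ z = GY.e 0 := by
    rw [hv, Category.assoc, hv0z, habs.1]
  have hf0v : GY.e 0 ≫ v = v := by
    rw [hv, ← Category.assoc, GY.e0_comp _ GY.e0_mem]
  -- z ≫ v is idempotent
  have hzv : (z ≫ v) ≫ (z ≫ v) = z ≫ v := by
    calc (z ≫ v) ≫ (z ≫ v) = z ≫ (v ≫ z) ≫ v := by simp
      _ = z ≫ GY.e 0 ≫ v := by rw [hvz]
      _ = z ≫ v := by rw [hf0v]
  have habs' := idem_absorb GX _ hzv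
  refine ⟨v ≫ GX.e 0, ⟨GY.e 0, GY.e0_mem, v0 ≫ GX.e 0, by rw [hv]; simp⟩, ?_, ?_⟩
  · rw [← Category.assoc]; exact habs'.2
  · rw [Category.assoc, he0z, hvz]

end Aux

/-- the groups together with the orbits `G₁·L` and `G₂·R` form a
sub-semicategory of `C` that is a groupoid. -/
theorem stmt_6 {C : Type*} [Category C] (X Y : C) (k₁ k₂ : ℕ)
    [Finite (X ⟶ X)] [Finite (X ⟶ Y)] [Finite (Y ⟶ X)] [Finite (Y ⟶ Y)]
    (hL : Nonempty (X ⟶ Y)) (hR : Nonempty (Y ⟶ X))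
    (GX : GrouplikeEnd X k₁) (GY : GrouplikeEnd Y k₂) :
    let G1L : Set (X ⟶ Y) := {z | ∃ g ∈ GX.G, ∃ x : X ⟶ Y, z = g ≫ x}
    let G2R : Set (Y ⟶ X) := {w | ∃ h ∈ GY.G, ∃ y : Y ⟶ X, w = h ≫ y}
    -- (i) closure under composition
    (∀ g ∈ GX.G, ∀ z ∈ G1L, g ≫ z ∈ G1L) ∧
    (∀ z ∈ G1L, ∀ h ∈ GY.G, z ≫ h ∈ G1L) ∧
    (∀ h ∈ GY.G, ∀ w ∈ G2R, h ≫ w ∈ G2R) ∧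
    (∀ w ∈ G2R, ∀ g ∈ GX.G, w ≫ g ∈ G2R) ∧
    -- (ii) composites of orbit elements land in the groups
    (∀ z ∈ G1L, ∀ w ∈ G2R, z ≫ w ∈ GX.G ∧ w ≫ z ∈ GY.G) ∧
    -- (iii) every element is invertible
    (∀ z ∈ G1L, ∃ w ∈ G2R, z ≫ w = GX.e 0 ∧ w ≫ z = GY.e 0) ∧
    (∀ w ∈ G2R, ∃ z ∈ G1L, z ≫ w = GX.e 0 ∧ w ≫ z = GY.e 0) := by
  intro G1L G2R
  -- any element of the group composed (on the right) with anything lands in the group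
  have absorbX : ∀ g ∈ GX.G, ∀ m : X ⟶ X, g ≫ m ∈ GX.G := by
    intro g hg m
    rcases GX.cover m with hG | ⟨i, _, rfl⟩
    · exact GX.mul_mem g hg m hG
    · rw [(GX.idem_comp_mem i g hg).2]; exact hg
  have absorbY : ∀ h ∈ GY.G, ∀ m : Y ⟶ Y, h ≫ m ∈ GY.G := by
    intro h hh m
    rcases GY.cover m with hG | ⟨i, _, rfl⟩
    · exact GY.mul_mem h hh m hG
    · rw [(GY.idem_comp_mem i h hh).2]; exact hh
  refine ⟨?_, ?_, ?_, ?_, ?_, ?_, ?_⟩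
  · rintro g hg z ⟨g', hg', x, rfl⟩
    exact ⟨g ≫ g', GX.mul_mem g hg g' hg', x, by simp⟩
  · rintro z ⟨g, hg, x, rfl⟩ h hh
    exact ⟨g, hg, x ≫ h, by simp⟩
  · rintro h hh w ⟨h', hh', y, rfl⟩
    exact ⟨h ≫ h', GY.mul_mem h hh h' hh', y, by simp⟩
  · rintro w ⟨h, hh, y, rfl⟩ g hg
    exact ⟨h, hh, y ≫ g, by simp⟩
  · rintro z ⟨g, hg, x, rfl⟩ w ⟨h, hh, y, rfl⟩
    constructor
    · have : (g ≫ x) ≫ h ≫ y = g ≫ (x ≫ h ≫ y) := by simp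
      rw [this]; exact absorbX g hg _
    · have : (h ≫ y) ≫ g ≫ x = h ≫ (y ≫ g ≫ x) := by simp
      rw [this]; exact absorbY h hh _
  · intro z hz
    obtain ⟨w, hw, h1, h2⟩ := key_inv hR GX GY z hz
    exact ⟨w, hw, h1, h2⟩
  · intro w hw
    obtain ⟨z, hz, h1, h2⟩ := key_inv hL GY GX w hw
    exact ⟨z, hz, h2, h1⟩
end

section
/- Let x ∈ L and y ∈ R. If x·y = e_i for some index 1 ≤ i ≤ k_1, then y·x = f_j for some index 1 ≤ j ≤ k_2; conversely, if y·x = f_j for some 1 ≤ j ≤ k_2, then x·y = e_i for some 1 ≤ i ≤ k_1. -/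
open CategoryTheory

/-- Auxiliary one-directional lemma: if `x ≫ y` is a non-group idempotent, so is `y ≫ x`. -/
lemma stmt_8_aux {C : Type*} [Category C] {X Y : C} {k₁ k₂ : ℕ}
    (GX : GrouplikeEnd X k₁) (GY : GrouplikeEnd Y k₂) (x : X ⟶ Y) (y : Y ⟶ X)
    (h : ∃ i : Fin (k₁ + 1), i ≠ 0 ∧ x ≫ y = GX.e i) :
    ∃ j : Fin (k₂ + 1), j ≠ 0 ∧ y ≫ x = GY.e j := by
  obtain ⟨i, hi, hxy⟩ := h
  rcases GY.cover (y ≫ x) with hg | ⟨j, hj, hyx⟩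
  · -- impossible: `y ≫ x ∈ G₂` leads to a contradiction
    exfalso
    have hei : GX.e i ≫ GX.e i = GX.e i := (GX.idem_comp_idem i i le_rfl).1
    have hxgy : x ≫ (y ≫ x) ≫ y = GX.e i := by
      calc x ≫ (y ≫ x) ≫ y = (x ≫ y) ≫ (x ≫ y) := by simp only [Category.assoc]
        _ = GX.e i := by rw [hxy]; exact hei
    set p : Y ⟶ Y := y ≫ GX.e 0 ≫ x with hp
    have hkey : ∀ m : Fin (k₂ + 1), p = GY.e m → False := by
      intro m hm
      have h2 : x ≫ GY.e m ≫ y = GX.e 0 := by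
        rw [← hm]
        calc x ≫ (y ≫ GX.e 0 ≫ x) ≫ y
            = (x ≫ y) ≫ GX.e 0 ≫ (x ≫ y) := by simp only [Category.assoc]
          _ = GX.e i ≫ GX.e 0 ≫ GX.e i := by rw [hxy]
          _ = GX.e i ≫ GX.e 0 := by
              rw [(GX.idem_comp_mem i _ GX.e0_mem).2]
          _ = GX.e 0 := (GX.idem_comp_mem i _ GX.e0_mem).1
      have h4 : GY.e m ≫ (y ≫ x) ≫ GY.e m = y ≫ x := by
        rw [(GY.idem_comp_mem m _ hg).2, (GY.idem_comp_mem m _ hg).1]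
      have h5 : GX.e 0 = GX.e i := by
        calc GX.e 0 = GX.e 0 ≫ GX.e 0 := (GX.e0_comp _ GX.e0_mem).symm
          _ = (x ≫ GY.e m ≫ y) ≫ (x ≫ GY.e m ≫ y) := by rw [h2]
          _ = x ≫ (GY.e m ≫ (y ≫ x) ≫ GY.e m) ≫ y := by simp only [Category.assoc]
          _ = x ≫ (y ≫ x) ≫ y := by rw [h4]
          _ = GX.e i := hxgy
      have : GX.e i ∈ GX.G := h5 ▸ GX.e0_mem
      exact GX.not_mem_G i hi this
    have hpp : p ≫ p = p := by
      calc p ≫ p = y ≫ GX.e 0 ≫ (x ≫ y) ≫ GX.e 0 ≫ x := by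
            simp only [hp, Category.assoc]
        _ = y ≫ GX.e 0 ≫ GX.e i ≫ GX.e 0 ≫ x := by rw [hxy]
        _ = y ≫ GX.e 0 ≫ GX.e 0 ≫ x := by
            congr 1
            calc GX.e 0 ≫ GX.e i ≫ GX.e 0 ≫ x
                = (GX.e 0 ≫ GX.e i) ≫ GX.e 0 ≫ x := by simp only [Category.assoc]
              _ = GX.e 0 ≫ GX.e 0 ≫ x := by
                  rw [(GX.idem_comp_mem i _ GX.e0_mem).2]
        _ = y ≫ GX.e 0 ≫ x := by
            congr 1
            calc GX.e 0 ≫ GX.e 0 ≫ x = (GX.e 0 ≫ GX.e 0) ≫ x := by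
                  simp only [Category.assoc]
              _ = GX.e 0 ≫ x := by rw [GX.e0_comp _ GX.e0_mem]
    rcases GY.cover p with hpG | ⟨m, hm, hpm⟩
    · -- an idempotent in the group must be the group identity
      obtain ⟨p', hp'G, hpp', hp'p⟩ := GY.exists_inv p hpG
      have : p = GY.e 0 := by
        calc p = GY.e 0 ≫ p := (GY.e0_comp p hpG).symm
          _ = (p' ≫ p) ≫ p := by rw [hp'p]
          _ = p' ≫ p ≫ p := by simp only [Category.assoc]
          _ = p' ≫ p := by rw [hpp]
          _ = GY.e 0 := hp'p
      exact hkey 0 this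
    · exact hkey m hpm
  · exact ⟨j, hj, hyx⟩

/-- `x·y` is a non-group idempotent `e_i` (some `1 ≤ i ≤ k₁`) if and only if
`y·x` is a non-group idempotent `f_j` (some `1 ≤ j ≤ k₂`). -/
theorem stmt_8 {C : Type*} [Category C] (X Y : C) (k₁ k₂ : ℕ)
    [Finite (X ⟶ X)] [Finite (X ⟶ Y)] [Finite (Y ⟶ X)] [Finite (Y ⟶ Y)]
    (hL : Nonempty (X ⟶ Y)) (hR : Nonempty (Y ⟶ X))
    (GX : GrouplikeEnd X k₁) (GY : GrouplikeEnd Y k₂) :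
    ∀ (x : X ⟶ Y) (y : Y ⟶ X),
      ((∃ i : Fin (k₁ + 1), i ≠ 0 ∧ x ≫ y = GX.e i) →
        ∃ j : Fin (k₂ + 1), j ≠ 0 ∧ y ≫ x = GY.e j) ∧
      ((∃ j : Fin (k₂ + 1), j ≠ 0 ∧ y ≫ x = GY.e j) →
        ∃ i : Fin (k₁ + 1), i ≠ 0 ∧ x ≫ y = GX.e i) := by
  intro x y
  exact ⟨stmt_8_aux GX GY x y, stmt_8_aux GY GX y x⟩
end

section
/- Let x ∈ L and y ∈ R. If x·y = e_0 (the group identity of G_1), then y·x = f_0 (the group identity of G_2). -/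
open CategoryTheory

/-- if `x·y = e₀` (the group identity of `G₁`) then `y·x = f₀`
(the group identity of `G₂`). -/
theorem stmt_9 {C : Type*} [Category C] (X Y : C) (k₁ k₂ : ℕ)
    [Finite (X ⟶ X)] [Finite (X ⟶ Y)] [Finite (Y ⟶ X)] [Finite (Y ⟶ Y)]
    (hL : Nonempty (X ⟶ Y)) (hR : Nonempty (Y ⟶ X))
    (GX : GrouplikeEnd X k₁) (GY : GrouplikeEnd Y k₂) :
    ∀ (x : X ⟶ Y) (y : Y ⟶ X), x ≫ y = GX.e 0 → y ≫ x = GY.e 0 := by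
  intro x y hxy
  have he00 : GX.e 0 ≫ GX.e 0 = GX.e 0 := GX.e0_comp _ GX.e0_mem
  have memG : ∀ m : X ⟶ X, GX.e 0 ≫ m ≫ GX.e 0 ∈ GX.G := by
    intro m
    rcases GX.cover m with hm | ⟨i, _, rfl⟩
    · rw [GX.comp_e0 m hm, GX.e0_comp m hm]; exact hm
    · rw [(GX.idem_comp_idem 0 i (Fin.zero_le i)).2, he00]; exact GX.e0_mem
  set x₁ : X ⟶ Y := GX.e 0 ≫ x with hx₁
  set y₁ : Y ⟶ X := y ≫ GX.e 0 with hy₁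
  have hx₁e : GX.e 0 ≫ x₁ = x₁ := by rw [hx₁, ← Category.assoc, he00]
  have hy₁e : y₁ ≫ GX.e 0 = y₁ := by rw [hy₁, Category.assoc, he00]
  have hxyr : ∀ {Z : C} (z : X ⟶ Z), x ≫ y ≫ z = GX.e 0 ≫ z := fun z => by
    rw [← Category.assoc, hxy]
  have he00r : ∀ {Z : C} (z : X ⟶ Z), GX.e 0 ≫ GX.e 0 ≫ z = GX.e 0 ≫ z := fun z => by
    rw [← Category.assoc, he00]
  have hxy₁ : x₁ ≫ y₁ = GX.e 0 := by
    rw [hx₁, hy₁]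
    simp only [Category.assoc, hxyr, he00r, he00]
  set E : Y ⟶ Y := y₁ ≫ x₁ with hE
  have hEE : E ≫ E = E := by
    rw [hE, Category.assoc, ← Category.assoc x₁ y₁, hxy₁, hx₁e]
  have hu2 : (y ≫ x) ≫ (y ≫ x) = E := by
    rw [hE, hx₁, hy₁]
    simp only [Category.assoc, hxyr, he00r, he00]
  rcases GY.cover E with hEG | ⟨j, hj, hEj⟩
  · -- E ∈ G₂, so E = f₀, then u = f₀
    obtain ⟨E', hE'G, hEE', _⟩ := GY.exists_inv E hEG
    have hEf0 : E = GY.e 0 := by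
      have h1 : (E ≫ E) ≫ E' = E ≫ E' := by rw [hEE]
      rw [Category.assoc, hEE', GY.comp_e0 E hEG] at h1
      exact h1
    have hu3 : (y ≫ x) ≫ (y ≫ x) ≫ (y ≫ x) = (y ≫ x) ≫ (y ≫ x) := by
      rw [hu2, hE, hx₁, hy₁]
      simp only [Category.assoc, hxyr, he00r, he00]
    rcases GY.cover (y ≫ x) with huG | ⟨i, hi, hui⟩
    · have h2 : (y ≫ x) ≫ GY.e 0 = y ≫ x := GY.comp_e0 _ huG
      calc y ≫ x = (y ≫ x) ≫ GY.e 0 := h2.symm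
        _ = (y ≫ x) ≫ E := by rw [hEf0]
        _ = (y ≫ x) ≫ (y ≫ x) ≫ (y ≫ x) := by rw [hu2]
        _ = (y ≫ x) ≫ (y ≫ x) := hu3
        _ = E := hu2
        _ = GY.e 0 := hEf0
    · have h3 : GY.e i ≫ GY.e i = GY.e i := (GY.idem_comp_idem i i le_rfl).1
      have h4 : GY.e i = GY.e 0 := by
        rw [← h3, ← hui, hu2, hEf0]
      exact absurd (GY.e_injective h4) hi
  · -- E = f_j with j ≠ 0 : derive a contradiction
    exfalso
    have hw : x₁ ≫ GY.e 0 ≫ y₁ ∈ GX.G := by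
      have heq : x₁ ≫ GY.e 0 ≫ y₁ = GX.e 0 ≫ (x ≫ GY.e 0 ≫ y) ≫ GX.e 0 := by
        rw [hx₁, hy₁]; simp only [Category.assoc]
      rw [heq]; exact memG _
    obtain ⟨w', hw'G, hww', _⟩ := GX.exists_inv _ hw
    have hkey : GY.e 0 ≫ y₁ ≫ w' ≫ x₁ = E := by
      calc GY.e 0 ≫ y₁ ≫ w' ≫ x₁
          = (E ≫ GY.e 0) ≫ y₁ ≫ w' ≫ x₁ := by
            rw [hEj, (GY.idem_comp_idem 0 j (Fin.zero_le j)).2]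
        _ = y₁ ≫ ((x₁ ≫ GY.e 0 ≫ y₁) ≫ w') ≫ x₁ := by
            rw [hE]; simp only [Category.assoc]
        _ = y₁ ≫ GX.e 0 ≫ x₁ := by rw [hww']
        _ = E := by rw [hx₁e, hE]
    rcases GY.cover (y₁ ≫ w' ≫ x₁) with hnG | ⟨i, hi, hni⟩
    · rw [GY.e0_comp _ hnG, hEj] at hkey
      exact GY.not_mem_G j hj (hkey ▸ hnG)
    · rw [hni, (GY.idem_comp_idem 0 i (Fin.zero_le i)).1, hEj] at hkey
      exact hj (GY.e_injective hkey).symm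
end

section
/- i_max = 0 if and only if j_max = 0. -/
open CategoryTheory

/-- An idempotent element of the group part is the group identity. -/
lemma GrouplikeEnd.idem_eq_e0 {C : Type*} [Category C] {X : C} {k : ℕ}
    (GX : GrouplikeEnd X k) {m : X ⟶ X} (hm : m ∈ GX.G) (h : m ≫ m = m) :
    m = GX.e 0 := by
  obtain ⟨m', _, h1, _⟩ := GX.exists_inv m hm
  calc m = m ≫ GX.e 0 := (GX.comp_e0 m hm).symm
    _ = m ≫ m ≫ m' := by rw [h1]
    _ = (m ≫ m) ≫ m' := by rw [Category.assoc]
    _ = m ≫ m' := by rw [h]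
    _ = GX.e 0 := h1

/-- Key lemma: if every product `x ≫ y : X ⟶ X` that equals some idempotent `e i`
forces `i = 0`, then every product `y ≫ x : Y ⟶ Y` equal to an idempotent `f j`
forces `j = 0`. -/
lemma GrouplikeEnd.key {C : Type*} [Category C] {X Y : C} {k₁ k₂ : ℕ}
    (GX : GrouplikeEnd X k₁) (GY : GrouplikeEnd Y k₂)
    (H : ∀ (i : Fin (k₁ + 1)) (x : X ⟶ Y) (y : Y ⟶ X), x ≫ y = GX.e i → i = 0)
    (j : Fin (k₂ + 1)) (x : X ⟶ Y) (y : Y ⟶ X) (h : y ≫ x = GY.e j) : j = 0 := by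
  by_contra hj
  -- an idempotent product x ≫ y is the group identity e 0
  have key0 : ∀ (a : X ⟶ Y) (b : Y ⟶ X), (a ≫ b) ≫ (a ≫ b) = a ≫ b →
      a ≫ b = GX.e 0 := by
    intro a b hab
    rcases GX.cover (a ≫ b) with hG | ⟨i, hi, he⟩
    · exact GX.idem_eq_e0 hG hab
    · exact absurd (H i a b he) hi
  have hjj : GY.e j ≫ GY.e j = GY.e j := (GY.idem_comp_idem j j le_rfl).1
  have h0j : GY.e 0 ≫ GY.e j = GY.e 0 := (GY.idem_comp_idem 0 j (Fin.zero_le j)).1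
  have hj0 : GY.e j ≫ GY.e 0 = GY.e 0 := (GY.idem_comp_idem 0 j (Fin.zero_le j)).2
  have h00 : GY.e 0 ≫ GY.e 0 = GY.e 0 := (GY.idem_comp_idem 0 0 le_rfl).1
  set x' := x ≫ GY.e j with hx'
  set y' := GY.e j ≫ y with hy'
  have hyx' : y' ≫ x' = GY.e j := by
    calc y' ≫ x' = GY.e j ≫ (y ≫ x) ≫ GY.e j := by
          simp only [hx', hy', Category.assoc]
      _ = GY.e j ≫ GY.e j ≫ GY.e j := by rw [h]
      _ = GY.e j := by rw [hjj, hjj]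
  have hxy' : x' ≫ y' = GX.e 0 := by
    apply key0
    calc (x' ≫ y') ≫ x' ≫ y' = x' ≫ (y' ≫ x') ≫ y' := by
          simp only [Category.assoc]
      _ = x' ≫ GY.e j ≫ y' := by rw [hyx']
      _ = x ≫ (GY.e j ≫ GY.e j) ≫ GY.e j ≫ y := by
          simp only [hx', hy', Category.assoc]
      _ = x' ≫ y' := by simp only [hjj, hx', hy', Category.assoc]
  set y₁ := GY.e 0 ≫ y' with hy₁
  have hyx₁ : y₁ ≫ x' = GY.e 0 := by
    calc y₁ ≫ x' = GY.e 0 ≫ y' ≫ x' := by simp only [hy₁, Category.assoc]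
      _ = GY.e 0 ≫ GY.e j := by rw [hyx']
      _ = GY.e 0 := h0j
  have hxy₁ : x' ≫ y₁ = GX.e 0 := by
    apply key0
    calc (x' ≫ y₁) ≫ x' ≫ y₁ = x' ≫ (y₁ ≫ x') ≫ y₁ := by
          simp only [Category.assoc]
      _ = x' ≫ GY.e 0 ≫ y₁ := by rw [hyx₁]
      _ = x' ≫ (GY.e 0 ≫ GY.e 0) ≫ y' := by simp only [hy₁, Category.assoc]
      _ = x' ≫ y₁ := by rw [h00, hy₁]
  -- now derive GY.e 0 = GY.e j
  have hfinal : GY.e 0 = GY.e j := by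
    calc GY.e 0 = GY.e 0 ≫ GY.e j := h0j.symm
      _ = (GY.e j ≫ GY.e 0) ≫ GY.e j := by rw [hj0]
      _ = (y' ≫ x') ≫ GY.e 0 ≫ (y' ≫ x') := by rw [hyx']; simp only [Category.assoc]
      _ = y' ≫ (x' ≫ GY.e 0 ≫ y') ≫ x' := by simp only [Category.assoc]
      _ = y' ≫ (x' ≫ y₁) ≫ x' := by simp only [hy₁, Category.assoc]
      _ = y' ≫ GX.e 0 ≫ x' := by rw [hxy₁]
      _ = y' ≫ (x' ≫ y') ≫ x' := by rw [hxy']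
      _ = (y' ≫ x') ≫ (y' ≫ x') := by simp only [Category.assoc]
      _ = GY.e j := by rw [hyx', hjj]
  exact hj (GY.e_injective hfinal).symm

/-- `i_max = 0` if and only if `j_max = 0`. -/
theorem stmt_11 {C : Type*} [Category C] (X Y : C) (k₁ k₂ : ℕ)
    [Finite (X ⟶ X)] [Finite (X ⟶ Y)] [Finite (Y ⟶ X)] [Finite (Y ⟶ Y)]
    (hL : Nonempty (X ⟶ Y)) (hR : Nonempty (Y ⟶ X))
    (GX : GrouplikeEnd X k₁) (GY : GrouplikeEnd Y k₂)
    (imax : Fin (k₁ + 1)) (jmax : Fin (k₂ + 1))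
    (himax : IsGreatest
      {i : Fin (k₁ + 1) | ∃ (x : X ⟶ Y) (y : Y ⟶ X), x ≫ y = GX.e i} imax)
    (hjmax : IsGreatest
      {j : Fin (k₂ + 1) | ∃ (x : X ⟶ Y) (y : Y ⟶ X), y ≫ x = GY.e j} jmax) :
    imax = 0 ↔ jmax = 0 := by
  constructor
  · intro h0
    have H : ∀ (i : Fin (k₁ + 1)) (x : X ⟶ Y) (y : Y ⟶ X), x ≫ y = GX.e i → i = 0 := by
      intro i x y hxy
      have := himax.2 ⟨x, y, hxy⟩
      rw [h0] at this
      exact Fin.le_zero_iff.mp this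
    obtain ⟨x, y, hxy⟩ := hjmax.1
    exact GX.key GY H jmax x y hxy
  · intro h0
    have H : ∀ (j : Fin (k₂ + 1)) (y : Y ⟶ X) (x : X ⟶ Y), y ≫ x = GY.e j → j = 0 := by
      intro j y x hyx
      have := hjmax.2 ⟨x, y, hyx⟩
      rw [h0] at this
      exact Fin.le_zero_iff.mp this
    obtain ⟨x, y, hxy⟩ := himax.1
    exact GY.key GX H imax y x hxy
end

section
/- Let i = i_max with witnesses x ∈ L, y ∈ R satisfying x·y = e_i, e_i·x = x and y·e_i = y, and let j' = j_max with witnesses x' ∈ L, y' ∈ R satisfying y'·x' = f_{j'}, x'·f_{j'} = x' and f_{j'}·y' = y'. If i ≥ 1 and j' ≥ 1, then x·y' = e_i and y'·x = f_{j'}; moreover e_i·x = x·f_{j'} = x and y'·e_i = f_{j'}·y' = y'. -/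
open CategoryTheory

/-- An idempotent lying in the group part must be the group identity `e 0`. -/
lemma GrouplikeEnd.idem_eq_e0_s12 {C : Type*} [Category C] {Z : C} {k : ℕ}
    (S : GrouplikeEnd Z k) {g : Z ⟶ Z} (hg : g ∈ S.G) (h : g ≫ g = g) :
    g = S.e 0 := by
  obtain ⟨g', _hg', h1, _h2⟩ := S.exists_inv g hg
  calc g = g ≫ S.e 0 := (S.comp_e0 g hg).symm
    _ = g ≫ g ≫ g' := by rw [h1]
    _ = (g ≫ g) ≫ g' := by rw [Category.assoc]
    _ = g ≫ g' := by rw [h]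
    _ = S.e 0 := h1

/-- Every idempotent is one of the `e t`. -/
lemma GrouplikeEnd.idem_classify {C : Type*} [Category C] {Z : C} {k : ℕ}
    (S : GrouplikeEnd Z k) {m : Z ⟶ Z} (h : m ≫ m = m) :
    ∃ t, m = S.e t := by
  rcases S.cover m with hm | ⟨t, _, ht⟩
  · exact ⟨0, S.idem_eq_e0_s12 hm h⟩
  · exact ⟨t, ht⟩

/-- if `i_max ≥ 1` and `j_max ≥ 1` then the maximal witnesses interact:
`x·y' = e_{i_max}` and `y'·x = f_{j_max}`, with the stated identity actions. -/
theorem stmt_12 {C : Type*} [Category C] (X Y : C) (k₁ k₂ : ℕ)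
    [Finite (X ⟶ X)] [Finite (X ⟶ Y)] [Finite (Y ⟶ X)] [Finite (Y ⟶ Y)]
    (hL : Nonempty (X ⟶ Y)) (hR : Nonempty (Y ⟶ X))
    (GX : GrouplikeEnd X k₁) (GY : GrouplikeEnd Y k₂)
    (imax : Fin (k₁ + 1)) (jmax : Fin (k₂ + 1))
    (himax : IsGreatest
      {i : Fin (k₁ + 1) | ∃ (x : X ⟶ Y) (y : Y ⟶ X), x ≫ y = GX.e i} imax)
    (hjmax : IsGreatest
      {j : Fin (k₂ + 1) | ∃ (x : X ⟶ Y) (y : Y ⟶ X), y ≫ x = GY.e j} jmax)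
    (x : X ⟶ Y) (y : Y ⟶ X)
    (hxy : x ≫ y = GX.e imax)
    (hex : GX.e imax ≫ x = x) (hye : y ≫ GX.e imax = y)
    (x' : X ⟶ Y) (y' : Y ⟶ X)
    (hyx' : y' ≫ x' = GY.e jmax)
    (hx'f : x' ≫ GY.e jmax = x') (hfy' : GY.e jmax ≫ y' = y')
    (hi : imax ≠ 0) (hj : jmax ≠ 0) :
    x ≫ y' = GX.e imax ∧ y' ≫ x = GY.e jmax ∧
    GX.e imax ≫ x = x ∧ x ≫ GY.e jmax = x ∧
    y' ≫ GX.e imax = y' ∧ GY.e jmax ≫ y' = y' := by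
  -- r := y ≫ x is idempotent, hence equals `GY.e s` for some `s ≤ jmax`.
  have hr2 : (y ≫ x) ≫ (y ≫ x) = y ≫ x := by
    calc (y ≫ x) ≫ (y ≫ x) = y ≫ (x ≫ y) ≫ x := by simp only [Category.assoc]
      _ = y ≫ GX.e imax ≫ x := by rw [hxy]
      _ = (y ≫ GX.e imax) ≫ x := by rw [Category.assoc]
      _ = y ≫ x := by rw [hye]
  obtain ⟨s, hs⟩ := GY.idem_classify hr2
  have hsle : s ≤ jmax := hjmax.2 ⟨x, y, hs⟩
  -- w := x' ≫ y' is idempotent, hence equals `GX.e t` for some `t ≤ imax`.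
  have hw2 : (x' ≫ y') ≫ (x' ≫ y') = x' ≫ y' := by
    calc (x' ≫ y') ≫ (x' ≫ y') = x' ≫ (y' ≫ x') ≫ y' := by simp only [Category.assoc]
      _ = x' ≫ GY.e jmax ≫ y' := by rw [hyx']
      _ = (x' ≫ GY.e jmax) ≫ y' := by rw [Category.assoc]
      _ = x' ≫ y' := by rw [hx'f]
  obtain ⟨t, htw⟩ := GX.idem_classify hw2
  have htle : t ≤ imax := himax.2 ⟨x', y', htw⟩
  have heii : GX.e imax ≫ GX.e imax = GX.e imax := (GX.idem_comp_idem imax imax le_rfl).1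
  have hfjj : GY.e jmax ≫ GY.e jmax = GY.e jmax := (GY.idem_comp_idem jmax jmax le_rfl).1
  -- d := x ≫ f ≫ y squares to e_imax.
  have hd2 : (x ≫ GY.e jmax ≫ y) ≫ (x ≫ GY.e jmax ≫ y) = GX.e imax := by
    have h1 : GY.e jmax ≫ GY.e s = GY.e s := (GY.idem_comp_idem s jmax hsle).2
    have h2 : GY.e s ≫ GY.e jmax = GY.e s := (GY.idem_comp_idem s jmax hsle).1
    calc (x ≫ GY.e jmax ≫ y) ≫ (x ≫ GY.e jmax ≫ y)
        = x ≫ GY.e jmax ≫ (y ≫ x) ≫ GY.e jmax ≫ y := by simp only [Category.assoc]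
      _ = x ≫ GY.e jmax ≫ GY.e s ≫ GY.e jmax ≫ y := by rw [hs]
      _ = x ≫ GY.e jmax ≫ (GY.e s ≫ GY.e jmax) ≫ y := by simp only [Category.assoc]
      _ = x ≫ GY.e jmax ≫ GY.e s ≫ y := by rw [h2]
      _ = x ≫ (GY.e jmax ≫ GY.e s) ≫ y := by simp only [Category.assoc]
      _ = x ≫ GY.e s ≫ y := by rw [h1]
      _ = x ≫ (y ≫ x) ≫ y := by rw [hs]
      _ = (x ≫ y) ≫ (x ≫ y) := by simp only [Category.assoc]
      _ = GX.e imax := by rw [hxy, heii]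
  -- hence d = e_imax.
  have hd : x ≫ GY.e jmax ≫ y = GX.e imax := by
    rcases GX.cover (x ≫ GY.e jmax ≫ y) with hm | ⟨u, _, hu⟩
    · exact absurd (hd2 ▸ GX.mul_mem _ hm _ hm) (GX.not_mem_G imax hi)
    · have : GX.e u = GX.e imax := by
        rw [← (GX.idem_comp_idem u u le_rfl).1, ← hu, hd2]
      rw [hu, this]
  -- d' := y' ≫ e ≫ x' squares to f_jmax.
  have hd'2 : (y' ≫ GX.e imax ≫ x') ≫ (y' ≫ GX.e imax ≫ x') = GY.e jmax := by
    have h1 : GX.e imax ≫ GX.e t = GX.e t := (GX.idem_comp_idem t imax htle).2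
    have h2 : GX.e t ≫ GX.e imax = GX.e t := (GX.idem_comp_idem t imax htle).1
    calc (y' ≫ GX.e imax ≫ x') ≫ (y' ≫ GX.e imax ≫ x')
        = y' ≫ GX.e imax ≫ (x' ≫ y') ≫ GX.e imax ≫ x' := by simp only [Category.assoc]
      _ = y' ≫ GX.e imax ≫ GX.e t ≫ GX.e imax ≫ x' := by rw [htw]
      _ = y' ≫ GX.e imax ≫ (GX.e t ≫ GX.e imax) ≫ x' := by simp only [Category.assoc]
      _ = y' ≫ GX.e imax ≫ GX.e t ≫ x' := by rw [h2]
      _ = y' ≫ (GX.e imax ≫ GX.e t) ≫ x' := by simp only [Category.assoc]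
      _ = y' ≫ GX.e t ≫ x' := by rw [h1]
      _ = y' ≫ (x' ≫ y') ≫ x' := by rw [htw]
      _ = (y' ≫ x') ≫ (y' ≫ x') := by simp only [Category.assoc]
      _ = GY.e jmax := by rw [hyx', hfjj]
  have hd' : y' ≫ GX.e imax ≫ x' = GY.e jmax := by
    rcases GY.cover (y' ≫ GX.e imax ≫ x') with hm | ⟨u, _, hu⟩
    · exact absurd (hd'2 ▸ GY.mul_mem _ hm _ hm) (GY.not_mem_G jmax hj)
    · have : GY.e u = GY.e jmax := by
        rw [← (GY.idem_comp_idem u u le_rfl).1, ← hu, hd'2]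
      rw [hu, this]
  -- b := y' ≫ x and c := y ≫ x' satisfy b ≫ c = f_jmax.
  have hbc : (y' ≫ x) ≫ (y ≫ x') = GY.e jmax := by
    calc (y' ≫ x) ≫ (y ≫ x') = y' ≫ (x ≫ y) ≫ x' := by simp only [Category.assoc]
      _ = y' ≫ GX.e imax ≫ x' := by rw [hxy]
      _ = GY.e jmax := hd'
  -- f_jmax ≫ b = b.
  have hfb : GY.e jmax ≫ (y' ≫ x) = y' ≫ x := by
    rw [← Category.assoc, hfy']
  -- Main claim on the Y side: b = f_jmax.
  have hb : y' ≫ x = GY.e jmax := by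
    rcases GY.cover (y' ≫ x) with hbG | ⟨s', _, hbs⟩
    · -- b in the group part: impossible.
      exfalso
      rcases GY.cover (y ≫ x') with hcG | ⟨m, hm0, hcm⟩
      · exact (GY.not_mem_G jmax hj) (hbc ▸ GY.mul_mem _ hbG _ hcG)
      · have : (y' ≫ x) ≫ (y ≫ x') = y' ≫ x := by
          rw [hcm]; exact (GY.idem_comp_mem m _ hbG).2
        rw [hbc] at this
        exact (GY.not_mem_G jmax hj) (this ▸ hbG)
    · rw [hbs]
      rcases le_total s' jmax with hle | hge
      · -- use b ≫ c = f_jmax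
        rcases GY.cover (y ≫ x') with hcG | ⟨m, _, hcm⟩
        · exfalso
          have : (y' ≫ x) ≫ (y ≫ x') = y ≫ x' := by
            rw [hbs]; exact (GY.idem_comp_mem s' _ hcG).1
          rw [hbc] at this
          exact (GY.not_mem_G jmax hj) (this ▸ hcG)
        · have key : GY.e s' ≫ GY.e m = GY.e jmax := by
            rw [← hbs, ← hcm, hbc]
          rcases le_total s' m with h1 | h1
          · rw [(GY.idem_comp_idem s' m h1).1] at key; exact key
          · rw [(GY.idem_comp_idem m s' h1).2] at key
            have hm : m = jmax := GY.e_injective key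
            have : s' = jmax := le_antisymm hle (hm ▸ h1)
            rw [this]
      · -- jmax ≤ s' : then f_jmax ≫ f_{s'} = f_jmax, but also = f_{s'}.
        have h1 : GY.e jmax ≫ GY.e s' = GY.e jmax :=
          (GY.idem_comp_idem jmax s' hge).1
        rw [hbs, h1] at hfb
        exact hfb.symm
  -- a := x ≫ y' and q := x' ≫ y satisfy a ≫ q = e_imax.
  have haq : (x ≫ y') ≫ (x' ≫ y) = GX.e imax := by
    calc (x ≫ y') ≫ (x' ≫ y) = x ≫ (y' ≫ x') ≫ y := by simp only [Category.assoc]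
      _ = x ≫ GY.e jmax ≫ y := by rw [hyx']
      _ = GX.e imax := hd
  have hea : GX.e imax ≫ (x ≫ y') = x ≫ y' := by
    rw [← Category.assoc, hex]
  -- Main claim on the X side: a = e_imax.
  have ha : x ≫ y' = GX.e imax := by
    rcases GX.cover (x ≫ y') with haG | ⟨t', _, hat⟩
    · exfalso
      rcases GX.cover (x' ≫ y) with hqG | ⟨m, _, hqm⟩
      · exact (GX.not_mem_G imax hi) (haq ▸ GX.mul_mem _ haG _ hqG)
      · have : (x ≫ y') ≫ (x' ≫ y) = x ≫ y' := by
          rw [hqm]; exact (GX.idem_comp_mem m _ haG).2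
        rw [haq] at this
        exact (GX.not_mem_G imax hi) (this ▸ haG)
    · rw [hat]
      rcases le_total t' imax with hle | hge
      · rcases GX.cover (x' ≫ y) with hqG | ⟨m, _, hqm⟩
        · exfalso
          have : (x ≫ y') ≫ (x' ≫ y) = x' ≫ y := by
            rw [hat]; exact (GX.idem_comp_mem t' _ hqG).1
          rw [haq] at this
          exact (GX.not_mem_G imax hi) (this ▸ hqG)
        · have key : GX.e t' ≫ GX.e m = GX.e imax := by
            rw [← hat, ← hqm, haq]
          rcases le_total t' m with h1 | h1
          · rw [(GX.idem_comp_idem t' m h1).1] at key; exact key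
          · rw [(GX.idem_comp_idem m t' h1).2] at key
            have hm : m = imax := GX.e_injective key
            have : t' = imax := le_antisymm hle (hm ▸ h1)
            rw [this]
      · have h1 : GX.e imax ≫ GX.e t' = GX.e imax :=
          (GX.idem_comp_idem imax t' hge).1
        rw [hat, h1] at hea
        exact hea.symm
  -- Remaining identity actions.
  have hxf : x ≫ GY.e jmax = x := by
    calc x ≫ GY.e jmax = x ≫ (y' ≫ x) := by rw [hb]
      _ = (x ≫ y') ≫ x := by rw [Category.assoc]
      _ = GX.e imax ≫ x := by rw [ha]
      _ = x := hex
  have hy'e : y' ≫ GX.e imax = y' := by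
    calc y' ≫ GX.e imax = y' ≫ (x ≫ y') := by rw [ha]
      _ = (y' ≫ x) ≫ y' := by rw [Category.assoc]
      _ = GY.e jmax ≫ y' := by rw [hb]
      _ = y' := hfy'
  exact ⟨ha, hb, hex, hxf, hy'e, hfy'⟩
end

section
/- Let i = i_max and j = j_max, and suppose there exist x ∈ L, y ∈ R with x·y = e_i, y·x = f_j, e_i·x = x = x·f_j and y·e_i = y = f_j·y. Then e_i·L·f_j = e_i·L = L·f_j and f_j·R·e_i = f_j·R = R·e_i, where e_i·L·f_j = {e_i·z·f_j : z ∈ L} and f_j·R·e_i = {f_j·w·e_i : w ∈ R}. -/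
open CategoryTheory

/-- for the maximal indices `i = i_max`, `j = j_max` with suitable witnesses,
`e_i·L·f_j = e_i·L = L·f_j` and `f_j·R·e_i = f_j·R = R·e_i`. -/
theorem stmt_13 {C : Type*} [Category C] (X Y : C) (k₁ k₂ : ℕ)
    [Finite (X ⟶ X)] [Finite (X ⟶ Y)] [Finite (Y ⟶ X)] [Finite (Y ⟶ Y)]
    (hL : Nonempty (X ⟶ Y)) (hR : Nonempty (Y ⟶ X))
    (GX : GrouplikeEnd X k₁) (GY : GrouplikeEnd Y k₂)
    (imax : Fin (k₁ + 1)) (jmax : Fin (k₂ + 1))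
    (himax : IsGreatest
      {i : Fin (k₁ + 1) | ∃ (x : X ⟶ Y) (y : Y ⟶ X), x ≫ y = GX.e i} imax)
    (hjmax : IsGreatest
      {j : Fin (k₂ + 1) | ∃ (x : X ⟶ Y) (y : Y ⟶ X), y ≫ x = GY.e j} jmax)
    (x : X ⟶ Y) (y : Y ⟶ X)
    (hxy : x ≫ y = GX.e imax) (hyx : y ≫ x = GY.e jmax)
    (hex : GX.e imax ≫ x = x) (hxf : x ≫ GY.e jmax = x)
    (hye : y ≫ GX.e imax = y) (hfy : GY.e jmax ≫ y = y) :
    ({z : X ⟶ Y | ∃ w : X ⟶ Y, z = GX.e imax ≫ w ≫ GY.e jmax} =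
      {z : X ⟶ Y | ∃ w : X ⟶ Y, z = GX.e imax ≫ w}) ∧
    ({z : X ⟶ Y | ∃ w : X ⟶ Y, z = GX.e imax ≫ w ≫ GY.e jmax} =
      {z : X ⟶ Y | ∃ w : X ⟶ Y, z = w ≫ GY.e jmax}) ∧
    ({w : Y ⟶ X | ∃ v : Y ⟶ X, w = GY.e jmax ≫ v ≫ GX.e imax} =
      {w : Y ⟶ X | ∃ v : Y ⟶ X, w = GY.e jmax ≫ v}) ∧
    ({w : Y ⟶ X | ∃ v : Y ⟶ X, w = GY.e jmax ≫ v ≫ GX.e imax} =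
      {w : Y ⟶ X | ∃ v : Y ⟶ X, w = v ≫ GX.e imax}) := by
  have key1 : ∀ w : X ⟶ Y, (y ≫ w) ≫ GY.e jmax = y ≫ w := by
    intro w
    rcases GY.cover (y ≫ w) with h | ⟨l, hl0, hl⟩
    · exact (GY.idem_comp_mem jmax _ h).2
    · have hle : l ≤ jmax := hjmax.2 ⟨w, y, hl⟩
      rw [hl]; exact (GY.idem_comp_idem l jmax hle).1
  have key2 : ∀ w : X ⟶ Y, GX.e imax ≫ (w ≫ y) = w ≫ y := by
    intro w
    rcases GX.cover (w ≫ y) with h | ⟨l, hl0, hl⟩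
    · exact (GX.idem_comp_mem imax _ h).1
    · have hle : l ≤ imax := himax.2 ⟨w, y, hl⟩
      rw [hl]; exact (GX.idem_comp_idem l imax hle).2
  have key3 : ∀ v : Y ⟶ X, (x ≫ v) ≫ GX.e imax = x ≫ v := by
    intro v
    rcases GX.cover (x ≫ v) with h | ⟨l, hl0, hl⟩
    · exact (GX.idem_comp_mem imax _ h).2
    · have hle : l ≤ imax := himax.2 ⟨x, v, hl⟩
      rw [hl]; exact (GX.idem_comp_idem l imax hle).1
  have key4 : ∀ v : Y ⟶ X, GY.e jmax ≫ (v ≫ x) = v ≫ x := by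
    intro v
    rcases GY.cover (v ≫ x) with h | ⟨l, hl0, hl⟩
    · exact (GY.idem_comp_mem jmax _ h).1
    · have hle : l ≤ jmax := hjmax.2 ⟨x, v, hl⟩
      rw [hl]; exact (GY.idem_comp_idem l jmax hle).2
  have hA : ∀ w : X ⟶ Y, GX.e imax ≫ w ≫ GY.e jmax = GX.e imax ≫ w := by
    intro w
    calc GX.e imax ≫ w ≫ GY.e jmax = x ≫ ((y ≫ w) ≫ GY.e jmax) := by
          rw [← hxy]; simp [Category.assoc]
      _ = x ≫ (y ≫ w) := by rw [key1]
      _ = GX.e imax ≫ w := by rw [← hxy]; simp [Category.assoc]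
  have hB : ∀ w : X ⟶ Y, GX.e imax ≫ w ≫ GY.e jmax = w ≫ GY.e jmax := by
    intro w
    calc GX.e imax ≫ w ≫ GY.e jmax = (GX.e imax ≫ (w ≫ y)) ≫ x := by
          rw [← hyx]; simp [Category.assoc]
      _ = (w ≫ y) ≫ x := by rw [key2]
      _ = w ≫ GY.e jmax := by rw [← hyx]; simp [Category.assoc]
  have hC : ∀ v : Y ⟶ X, GY.e jmax ≫ v ≫ GX.e imax = GY.e jmax ≫ v := by
    intro v
    calc GY.e jmax ≫ v ≫ GX.e imax = y ≫ ((x ≫ v) ≫ GX.e imax) := by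
          rw [← hyx]; simp [Category.assoc]
      _ = y ≫ (x ≫ v) := by rw [key3]
      _ = GY.e jmax ≫ v := by rw [← hyx]; simp [Category.assoc]
  have hD : ∀ v : Y ⟶ X, GY.e jmax ≫ v ≫ GX.e imax = v ≫ GX.e imax := by
    intro v
    calc GY.e jmax ≫ v ≫ GX.e imax = (GY.e jmax ≫ (v ≫ x)) ≫ y := by
          rw [← hxy]; simp [Category.assoc]
      _ = (v ≫ x) ≫ y := by rw [key4]
      _ = v ≫ GX.e imax := by rw [← hxy]; simp [Category.assoc]
  refine ⟨?_, ?_, ?_, ?_⟩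
  · ext z
    constructor
    · rintro ⟨w, rfl⟩; exact ⟨w ≫ GY.e jmax, rfl⟩
    · rintro ⟨w, rfl⟩; exact ⟨w, (hA w).symm⟩
  · ext z
    constructor
    · rintro ⟨w, rfl⟩; exact ⟨GX.e imax ≫ w, by rw [Category.assoc, hB]⟩
    · rintro ⟨w, rfl⟩; exact ⟨w, (hB w).symm⟩
  · ext z
    constructor
    · rintro ⟨v, rfl⟩; exact ⟨v ≫ GX.e imax, rfl⟩
    · rintro ⟨v, rfl⟩; exact ⟨v, (hC v).symm⟩
  · ext z
    constructor
    · rintro ⟨v, rfl⟩; exact ⟨GY.e jmax ≫ v, by rw [Category.assoc, hD]⟩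
    · rintro ⟨v, rfl⟩; exact ⟨v, (hD v).symm⟩
end

section
/- Let i = i_max and j = j_max, with witnesses x ∈ L, y ∈ R satisfying x·y = e_i, y·x = f_j, e_i·x = x = x·f_j and y·e_i = y = f_j·y. Set A' = G_1 ∪ {e_1,…,e_i}, B' = G_2 ∪ {f_1,…,f_j}, L' = e_i·L·f_j = {e_i·z·f_j : z ∈ L} and R' = f_j·R·e_i = {f_j·w·e_i : w ∈ R}. Then these sets form a sub-semicategory C' of C which is itself a category: A'·A' ⊆ A', B'·B' ⊆ B', A'·L' ⊆ L', L'·B' ⊆ L', B'·R' ⊆ R', R'·A' ⊆ R', L'·R' ⊆ A', R'·L' ⊆ B', and e_i ∈ A', f_j ∈ B' act as two-sided identities: e_i·a = a·e_i = a for a ∈ A', f_j·b = b·f_j = b for b ∈ B', e_i·z = z = z·f_j for z ∈ L', and f_j·w = w = w·e_i for w ∈ R'. -/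
open CategoryTheory

/-- the sets `A' = G₁ ∪ {e_1,…,e_{i_max}}`, `B' = G₂ ∪ {f_1,…,f_{j_max}}`,
`L' = e_{i_max}·L·f_{j_max}` and `R' = f_{j_max}·R·e_{i_max}` form a sub-semicategory of `C`
that is itself a category, with identities `e_{i_max}` and `f_{j_max}`. -/
theorem stmt_14 {C : Type*} [Category C] (X Y : C) (k₁ k₂ : ℕ)
    [Finite (X ⟶ X)] [Finite (X ⟶ Y)] [Finite (Y ⟶ X)] [Finite (Y ⟶ Y)]
    (hL : Nonempty (X ⟶ Y)) (hR : Nonempty (Y ⟶ X))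
    (GX : GrouplikeEnd X k₁) (GY : GrouplikeEnd Y k₂)
    (imax : Fin (k₁ + 1)) (jmax : Fin (k₂ + 1))
    (himax : IsGreatest
      {i : Fin (k₁ + 1) | ∃ (x : X ⟶ Y) (y : Y ⟶ X), x ≫ y = GX.e i} imax)
    (hjmax : IsGreatest
      {j : Fin (k₂ + 1) | ∃ (x : X ⟶ Y) (y : Y ⟶ X), y ≫ x = GY.e j} jmax)
    (x : X ⟶ Y) (y : Y ⟶ X)
    (hxy : x ≫ y = GX.e imax) (hyx : y ≫ x = GY.e jmax)
    (hex : GX.e imax ≫ x = x) (hxf : x ≫ GY.e jmax = x)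
    (hye : y ≫ GX.e imax = y) (hfy : GY.e jmax ≫ y = y) :
    let A' : Set (X ⟶ X) :=
      GX.G ∪ {a | ∃ m : Fin (k₁ + 1), m ≠ 0 ∧ m ≤ imax ∧ a = GX.e m}
    let B' : Set (Y ⟶ Y) :=
      GY.G ∪ {b | ∃ m : Fin (k₂ + 1), m ≠ 0 ∧ m ≤ jmax ∧ b = GY.e m}
    let L' : Set (X ⟶ Y) := {z | ∃ w : X ⟶ Y, z = GX.e imax ≫ w ≫ GY.e jmax}
    let R' : Set (Y ⟶ X) := {w | ∃ v : Y ⟶ X, w = GY.e jmax ≫ v ≫ GX.e imax}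
    -- closure under composition
    (∀ a ∈ A', ∀ a' ∈ A', a ≫ a' ∈ A') ∧
    (∀ b ∈ B', ∀ b' ∈ B', b ≫ b' ∈ B') ∧
    (∀ a ∈ A', ∀ z ∈ L', a ≫ z ∈ L') ∧
    (∀ z ∈ L', ∀ b ∈ B', z ≫ b ∈ L') ∧
    (∀ b ∈ B', ∀ w ∈ R', b ≫ w ∈ R') ∧
    (∀ w ∈ R', ∀ a ∈ A', w ≫ a ∈ R') ∧
    (∀ z ∈ L', ∀ w ∈ R', z ≫ w ∈ A') ∧
    (∀ w ∈ R', ∀ z ∈ L', w ≫ z ∈ B') ∧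
    -- identities
    GX.e imax ∈ A' ∧ GY.e jmax ∈ B' ∧
    (∀ a ∈ A', GX.e imax ≫ a = a ∧ a ≫ GX.e imax = a) ∧
    (∀ b ∈ B', GY.e jmax ≫ b = b ∧ b ≫ GY.e jmax = b) ∧
    (∀ z ∈ L', GX.e imax ≫ z = z ∧ z ≫ GY.e jmax = z) ∧
    (∀ w ∈ R', GY.e jmax ≫ w = w ∧ w ≫ GX.e imax = w) := by
  intro A' B' L' R'
  have hii : GX.e imax ≫ GX.e imax = GX.e imax := (GX.idem_comp_idem imax imax le_rfl).1
  have hjj : GY.e jmax ≫ GY.e jmax = GY.e jmax := (GY.idem_comp_idem jmax jmax le_rfl).1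
  have heA : ∀ a ∈ A', GX.e imax ≫ a = a ∧ a ≫ GX.e imax = a := by
    rintro a (hg | ⟨m, hm0, hmle, rfl⟩)
    · exact ⟨(GX.idem_comp_mem imax a hg).1, (GX.idem_comp_mem imax a hg).2⟩
    · exact ⟨(GX.idem_comp_idem m imax hmle).2, (GX.idem_comp_idem m imax hmle).1⟩
  have heB : ∀ b ∈ B', GY.e jmax ≫ b = b ∧ b ≫ GY.e jmax = b := by
    rintro b (hg | ⟨m, hm0, hmle, rfl⟩)
    · exact ⟨(GY.idem_comp_mem jmax b hg).1, (GY.idem_comp_mem jmax b hg).2⟩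
    · exact ⟨(GY.idem_comp_idem m jmax hmle).2, (GY.idem_comp_idem m jmax hmle).1⟩
  have hAA : ∀ a ∈ A', ∀ a' ∈ A', a ≫ a' ∈ A' := by
    rintro a (hg | ⟨m, hm0, hmle, rfl⟩) a' (hg' | ⟨m', hm0', hmle', rfl⟩)
    · exact Or.inl (GX.mul_mem a hg a' hg')
    · rw [(GX.idem_comp_mem m' a hg).2]; exact Or.inl hg
    · rw [(GX.idem_comp_mem m a' hg').1]; exact Or.inl hg'
    · rcases le_total m m' with h | h
      · rw [(GX.idem_comp_idem m m' h).1]; exact Or.inr ⟨m, hm0, hmle, rfl⟩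
      · rw [(GX.idem_comp_idem m' m h).2]; exact Or.inr ⟨m', hm0', hmle', rfl⟩
  have hBB : ∀ b ∈ B', ∀ b' ∈ B', b ≫ b' ∈ B' := by
    rintro b (hg | ⟨m, hm0, hmle, rfl⟩) b' (hg' | ⟨m', hm0', hmle', rfl⟩)
    · exact Or.inl (GY.mul_mem b hg b' hg')
    · rw [(GY.idem_comp_mem m' b hg).2]; exact Or.inl hg
    · rw [(GY.idem_comp_mem m b' hg').1]; exact Or.inl hg'
    · rcases le_total m m' with h | h
      · rw [(GY.idem_comp_idem m m' h).1]; exact Or.inr ⟨m, hm0, hmle, rfl⟩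
      · rw [(GY.idem_comp_idem m' m h).2]; exact Or.inr ⟨m', hm0', hmle', rfl⟩
  refine ⟨hAA, hBB, ?_, ?_, ?_, ?_, ?_, ?_, ?_, ?_, heA, heB, ?_, ?_⟩
  · rintro a ha z ⟨w, rfl⟩
    refine ⟨a ≫ GX.e imax ≫ w, ?_⟩
    simp only [Category.assoc]
    rw [reassoc_of% (heA a ha).1]
  · rintro z ⟨w, rfl⟩ b hb
    refine ⟨w ≫ GY.e jmax ≫ b, ?_⟩
    simp only [Category.assoc]
    rw [(heB b hb).2]
  · rintro b hb w ⟨v, rfl⟩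
    refine ⟨b ≫ GY.e jmax ≫ v, ?_⟩
    simp only [Category.assoc]
    rw [reassoc_of% (heB b hb).1]
  · rintro w ⟨v, rfl⟩ a ha
    refine ⟨v ≫ GX.e imax ≫ a, ?_⟩
    simp only [Category.assoc]
    rw [(heA a ha).2]
  · rintro z ⟨w, rfl⟩ w' ⟨v, rfl⟩
    rcases GX.cover ((GX.e imax ≫ w ≫ GY.e jmax) ≫ GY.e jmax ≫ v ≫ GX.e imax) with h | ⟨m, hm0, hpe⟩
    · exact Or.inl h
    · have habs : GX.e imax ≫ GX.e m = GX.e m := by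
        rw [← hpe]
        simp only [Category.assoc]
        rw [reassoc_of% hii]
      rcases le_total m imax with h | h
      · exact Or.inr ⟨m, hm0, h, hpe⟩
      · have : GX.e m = GX.e imax := by
          rw [← habs, (GX.idem_comp_idem imax m h).1]
        have hm : m = imax := GX.e_injective this
        exact Or.inr ⟨m, hm0, le_of_eq hm, hpe⟩
  · rintro w ⟨v, rfl⟩ z ⟨u, rfl⟩
    rcases GY.cover ((GY.e jmax ≫ v ≫ GX.e imax) ≫ GX.e imax ≫ u ≫ GY.e jmax) with h | ⟨m, hm0, hpe⟩
    · exact Or.inl h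
    · have habs : GY.e jmax ≫ GY.e m = GY.e m := by
        rw [← hpe]
        simp only [Category.assoc]
        rw [reassoc_of% hjj]
      rcases le_total m jmax with h | h
      · exact Or.inr ⟨m, hm0, h, hpe⟩
      · have : GY.e m = GY.e jmax := by
          rw [← habs, (GY.idem_comp_idem jmax m h).1]
        have hm : m = jmax := GY.e_injective this
        exact Or.inr ⟨m, hm0, le_of_eq hm, hpe⟩
  · by_cases h : imax = 0
    · exact Or.inl (h ▸ GX.e0_mem)
    · exact Or.inr ⟨imax, h, le_rfl, rfl⟩
  · by_cases h : jmax = 0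
    · exact Or.inl (h ▸ GY.e0_mem)
    · exact Or.inr ⟨jmax, h, le_rfl, rfl⟩
  · rintro z ⟨w, rfl⟩
    constructor
    · rw [reassoc_of% hii]
    · simp only [Category.assoc]; rw [hjj]
  · rintro w ⟨v, rfl⟩
    constructor
    · rw [reassoc_of% hjj]
    · simp only [Category.assoc]; rw [hii]
end

section
/- The two maximal indices coincide: i_max = j_max, and there is a monoid isomorphism between G_1 ∪ {e_1,…,e_{i_max}} (with the multiplication inherited from C(X,X)) and G_2 ∪ {f_1,…,f_{j_max}} (with the multiplication inherited from C(Y,Y)). -/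
open CategoryTheory

namespace Stmt15Aux
variable {C : Type*} [Category C]

/-- `n`-fold composition power of an endomorphism. -/
def epow {Q : C} (u : Q ⟶ Q) : ℕ → (Q ⟶ Q)
  | 0 => 𝟙 Q
  | n + 1 => epow u n ≫ u

lemma epow_succ {Q : C} (u : Q ⟶ Q) (n : ℕ) : epow u (n + 1) = epow u n ≫ u := rfl

lemma epow_add {Q : C} (u : Q ⟶ Q) (m n : ℕ) :
    epow u (m + n) = epow u m ≫ epow u n := by
  induction n with
  | zero => simp [epow]
  | succ n ih =>
    show epow u ((m + n) + 1) = _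
    rw [epow, ih, epow, Category.assoc]

lemma exists_idem_pow {Q : C} [Finite (Q ⟶ Q)] (u : Q ⟶ Q) :
    ∃ n, 1 ≤ n ∧ epow u n ≫ epow u n = epow u n := by
  obtain ⟨a₀, b₀, hne, heq⟩ := Finite.exists_ne_map_eq_of_infinite (epow u)
  have hcyc : ∃ a d, 1 ≤ d ∧ epow u (a + d) = epow u a := by
    rcases Nat.lt_or_ge a₀ b₀ with h | h
    · exact ⟨a₀, b₀ - a₀, by omega, by rw [show a₀ + (b₀ - a₀) = b₀ by omega]; exact heq.symm⟩
    · have h' : b₀ < a₀ := by omega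
      exact ⟨b₀, a₀ - b₀, by omega, by rw [show b₀ + (a₀ - b₀) = a₀ by omega]; exact heq⟩
  obtain ⟨a, d, hd, hcyc⟩ := hcyc
  have hk : ∀ kk, epow u (a + kk * d) = epow u a := by
    intro kk
    induction kk with
    | zero => simp
    | succ kk ih =>
      have : a + (kk + 1) * d = (a + kk * d) + d := by ring
      rw [this, epow_add, ih, ← epow_add, hcyc]
  have hshift : ∀ kk m, epow u (a + kk * d + m) = epow u (a + m) := by
    intro kk m
    rw [epow_add, hk, ← epow_add]
  have main : ∀ n, a ≤ n → n = (a + 1) * d → epow u n ≫ epow u n = epow u n := by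
    intro n han hn
    have harith : n + n = a + (a + 1) * d + (n - a) := by rw [← hn]; omega
    rw [← epow_add, harith, hshift]
    congr 1
    omega
  refine ⟨(a + 1) * d, ?_, main _ ?_ rfl⟩
  · exact Nat.mul_pos (Nat.succ_pos a) hd
  · calc a ≤ a + 1 := by omega
      _ = (a + 1) * 1 := by ring
      _ ≤ (a + 1) * d := Nat.mul_le_mul_left _ hd

/-- An idempotent element of the group part is the group identity. -/
lemma idem_mem_eq_e0 {Q : C} {k' : ℕ} (GQ : GrouplikeEnd Q k') {b : Q ⟶ Q}
    (hb : b ∈ GQ.G) (hidem : b ≫ b = b) : b = GQ.e 0 := by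
  obtain ⟨b', hb', h1, h2⟩ := GQ.exists_inv b hb
  have h3 := congrArg (· ≫ b') hidem
  simp only [Category.assoc, h1] at h3
  rwa [GQ.comp_e0 b hb] at h3

lemma aux {P Q : C} {k k' : ℕ} [Finite (Q ⟶ Q)]
    (GP : GrouplikeEnd P k) (GQ : GrouplikeEnd Q k')
    (im : Fin (k + 1)) (jm : Fin (k' + 1))
    (s : P ⟶ Q) (t : Q ⟶ P) (hst : s ≫ t = GP.e im)
    (hjub : ∀ j : Fin (k' + 1), (∃ (x : P ⟶ Q) (y : Q ⟶ P), y ≫ x = GQ.e j) → j ≤ jm) :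
    ∃ (l : Fin (k' + 1)) (θ : (P ⟶ P) → (Q ⟶ Q)),
      l ≤ jm ∧ im.val ≤ l.val ∧
      Set.BijOn θ {a | GP.e im ≫ a = a ∧ a ≫ GP.e im = a}
        {b | GQ.e l ≫ b = b ∧ b ≫ GQ.e l = b} ∧
      (∀ a, GP.e im ≫ a = a → a ≫ GP.e im = a →
        ∀ a', GP.e im ≫ a' = a' → a' ≫ GP.e im = a' →
        θ (a ≫ a') = θ a ≫ θ a') ∧
      θ (GP.e im) = GQ.e l := by
  classical
  have hδ : GP.e im ≫ GP.e im = GP.e im := (GP.idem_comp_idem im im le_rfl).1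
  obtain ⟨n, hn1, hnidem⟩ := exists_idem_pow (t ≫ s)
  have hcomm : ∀ m, s ≫ epow (t ≫ s) m = epow (s ≫ t) m ≫ s := by
    intro m
    induction m with
    | zero => simp [epow]
    | succ m ih =>
      rw [epow_succ, epow_succ, ← Category.assoc, ih]
      simp only [Category.assoc]
  have hδpow : ∀ m, epow (GP.e im) (m + 1) = GP.e im := by
    intro m
    induction m with
    | zero => simp [epow]
    | succ m ih => rw [epow_succ, ih, hδ]
  have hstn : epow (s ≫ t) n = GP.e im := by
    rw [hst, show n = (n - 1) + 1 by omega, hδpow]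
  -- the partner morphism
  set t1 : Q ⟶ P := epow (t ≫ s) (n - 1) ≫ t with ht1
  have hst1 : s ≫ t1 = GP.e im := by
    rw [ht1, ← Category.assoc, hcomm, Category.assoc, ← epow_succ,
      show (n - 1) + 1 = n by omega]
    exact hstn
  have ht1s : t1 ≫ s = epow (t ≫ s) n := by
    rw [ht1, Category.assoc, ← epow_succ, show (n - 1) + 1 = n by omega]
  set ε : Q ⟶ Q := epow (t ≫ s) n with hεdef
  have hε : ε ≫ ε = ε := hnidem
  -- normalized pair
  set s₂ : P ⟶ Q := GP.e im ≫ s with hs₂def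
  set t₂ : Q ⟶ P := t1 ≫ GP.e im with ht₂def
  have h1 : s₂ ≫ t₂ = GP.e im := by
    rw [hs₂def, ht₂def]
    simp only [Category.assoc]
    rw [reassoc_of% hst1, hδ, hδ]
  have h2 : t₂ ≫ s₂ = ε := by
    rw [hs₂def, ht₂def]
    simp only [Category.assoc]
    rw [reassoc_of% hδ, ← hst1]
    simp only [Category.assoc]
    rw [reassoc_of% ht1s, ht1s, hε]
  have hδs₂ : GP.e im ≫ s₂ = s₂ := by rw [hs₂def, reassoc_of% hδ]
  have ht₂δ : t₂ ≫ GP.e im = t₂ := by rw [ht₂def, Category.assoc, hδ]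
  have hsε : s ≫ ε = GP.e im ≫ s := by rw [hεdef, hcomm, hstn]
  have hs₂ε : s₂ ≫ ε = s₂ := by
    rw [hs₂def, Category.assoc, hsε, reassoc_of% hδ]
  have hεt1 : ε ≫ t1 = t1 ≫ GP.e im := by
    rw [← ht1s, Category.assoc, hst1]
  have hεt₂ : ε ≫ t₂ = t₂ := by
    rw [ht₂def, ← Category.assoc, hεt1, Category.assoc, hδ]
  -- the maps
  set θ : (P ⟶ P) → (Q ⟶ Q) := fun a => t₂ ≫ a ≫ s₂ with hθdef
  set θ' : (Q ⟶ Q) → (P ⟶ P) := fun b => s₂ ≫ b ≫ t₂ with hθ'def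
  -- find l with GQ.e l = ε
  obtain ⟨l, hlε, hljm⟩ : ∃ l, GQ.e l = ε ∧ l ≤ jm := by
    rcases GQ.cover ε with hεG | ⟨m, hm0, hmε⟩
    · exact ⟨0, (idem_mem_eq_e0 GQ hεG hε).symm, Fin.zero_le jm⟩
    · exact ⟨m, hmε.symm, hjub m ⟨s, t1, by rw [ht1s, hmε]⟩⟩
  have hmapsθ : Set.MapsTo θ {a | GP.e im ≫ a = a ∧ a ≫ GP.e im = a}
      {b | GQ.e l ≫ b = b ∧ b ≫ GQ.e l = b} := by
    intro a _
    constructor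
    · rw [hlε, hθdef]
      simp only
      rw [← Category.assoc, hεt₂]
    · rw [hlε, hθdef]
      simp only [Category.assoc]
      rw [hs₂ε]
  have hmapsθ' : Set.MapsTo θ' {b | GQ.e l ≫ b = b ∧ b ≫ GQ.e l = b}
      {a | GP.e im ≫ a = a ∧ a ≫ GP.e im = a} := by
    intro b _
    constructor
    · rw [hθ'def]
      simp only
      rw [← Category.assoc, hδs₂]
    · rw [hθ'def]
      simp only [Category.assoc]
      rw [ht₂δ]
  have hleft : Set.LeftInvOn θ' θ {a | GP.e im ≫ a = a ∧ a ≫ GP.e im = a} := by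
    intro a ha
    rw [hθdef, hθ'def]
    simp only [Category.assoc]
    rw [reassoc_of% h1, h1, ha.2, ha.1]
  have hright : Set.RightInvOn θ' θ {b | GQ.e l ≫ b = b ∧ b ≫ GQ.e l = b} := by
    intro b hb
    rw [hlε] at hb
    rw [hθdef, hθ'def]
    simp only [Category.assoc]
    rw [reassoc_of% h2, h2, hb.2, hb.1]
  have hbij : Set.BijOn θ {a | GP.e im ≫ a = a ∧ a ≫ GP.e im = a}
      {b | GQ.e l ≫ b = b ∧ b ≫ GQ.e l = b} :=
    Set.InvOn.bijOn ⟨hleft, hright⟩ hmapsθ hmapsθ'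
  have hmul : ∀ a, GP.e im ≫ a = a → a ≫ GP.e im = a →
      ∀ a', GP.e im ≫ a' = a' → a' ≫ GP.e im = a' →
      θ (a ≫ a') = θ a ≫ θ a' := by
    intro a _ _ a' ha'1 _
    rw [hθdef]
    simp only [Category.assoc]
    rw [reassoc_of% h1, reassoc_of% ha'1]
  have hθδ : θ (GP.e im) = GQ.e l := by
    rw [hθdef]
    simp only
    rw [hδs₂, h2, hlε]
  -- cardinality bound im.val ≤ l.val
  have hidemchar : ∀ b : Q ⟶ Q, GQ.e l ≫ b = b → b ≫ b = b →
      ∃ j, j ≤ l ∧ b = GQ.e j := by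
    intro b hb hbb
    rcases GQ.cover b with hbG | ⟨m, hm0, rfl⟩
    · exact ⟨0, Fin.zero_le l, idem_mem_eq_e0 GQ hbG hbb⟩
    · rcases le_total m l with h | h
      · exact ⟨m, h, rfl⟩
      · have h2' := (GQ.idem_comp_idem l m h).1
        rw [h2'] at hb
        exact ⟨m, le_of_eq (GQ.e_injective hb).symm, rfl⟩
  have hkey : ∀ m : Fin (k + 1), m ≤ im → ∃ j : Fin (k' + 1), j ≤ l ∧ θ (GP.e m) = GQ.e j := by
    intro m hm
    have hmem : GP.e m ∈ {a | GP.e im ≫ a = a ∧ a ≫ GP.e im = a} :=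
      ⟨(GP.idem_comp_idem m im hm).2, (GP.idem_comp_idem m im hm).1⟩
    have hmm := (GP.idem_comp_idem m m le_rfl).1
    have hidm : θ (GP.e m) ≫ θ (GP.e m) = θ (GP.e m) := by
      rw [← hmul _ hmem.1 hmem.2 _ hmem.1 hmem.2, hmm]
    obtain ⟨j, hj, hje⟩ := hidemchar _ (hmapsθ hmem).1 hidm
    exact ⟨j, hj, hje⟩
  choose J hJle hJeq using hkey
  have hcard : im.val ≤ l.val := by
    have hlt : ∀ m : Fin (im.val + 1), m.val < k + 1 := fun m => by
      have h1' := m.isLt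
      have h2' := im.isLt
      omega
    have hle : ∀ m : Fin (im.val + 1), (⟨m.val, hlt m⟩ : Fin (k + 1)) ≤ im := fun m => by
      rw [Fin.le_def]
      exact Nat.lt_succ_iff.mp m.isLt
    set F : Fin (im.val + 1) → Fin (l.val + 1) := fun m =>
      ⟨(J ⟨m.val, hlt m⟩ (hle m)).val, by
        have := Fin.le_def.mp (hJle ⟨m.val, hlt m⟩ (hle m))
        omega⟩ with hF
    have hFinj : Function.Injective F := by
      intro m₁ m₂ hFm
      have hvals : (J ⟨m₁.val, hlt m₁⟩ (hle m₁)).val = (J ⟨m₂.val, hlt m₂⟩ (hle m₂)).val := by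
        simpa [hF] using congrArg Fin.val hFm
      have hjeq : J ⟨m₁.val, hlt m₁⟩ (hle m₁) = J ⟨m₂.val, hlt m₂⟩ (hle m₂) := Fin.ext hvals
      have hθeq : θ (GP.e ⟨m₁.val, hlt m₁⟩) = θ (GP.e ⟨m₂.val, hlt m₂⟩) := by
        rw [hJeq _ (hle m₁), hJeq _ (hle m₂), hjeq]
      have hmem₁ : GP.e ⟨m₁.val, hlt m₁⟩ ∈ {a | GP.e im ≫ a = a ∧ a ≫ GP.e im = a} :=
        ⟨(GP.idem_comp_idem _ im (hle m₁)).2, (GP.idem_comp_idem _ im (hle m₁)).1⟩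
      have hmem₂ : GP.e ⟨m₂.val, hlt m₂⟩ ∈ {a | GP.e im ≫ a = a ∧ a ≫ GP.e im = a} :=
        ⟨(GP.idem_comp_idem _ im (hle m₂)).2, (GP.idem_comp_idem _ im (hle m₂)).1⟩
      have heeq := hbij.injOn hmem₁ hmem₂ hθeq
      have hfin := GP.e_injective heeq
      have hval2 := congrArg Fin.val hfin
      simp only at hval2
      exact Fin.ext hval2
    have := Fintype.card_le_of_injective F hFinj
    simpa using this
  exact ⟨l, θ, hljm, hcard, hbij, hmul, hθδ⟩

end Stmt15Aux

/-- the maximal indices coincide, `i_max = j_max`, and the monoids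
`G₁ ∪ {e_1,…,e_{i_max}}` and `G₂ ∪ {f_1,…,f_{j_max}}` are isomorphic. -/
theorem stmt_15 {C : Type*} [Category C] (X Y : C) (k₁ k₂ : ℕ)
    [Finite (X ⟶ X)] [Finite (X ⟶ Y)] [Finite (Y ⟶ X)] [Finite (Y ⟶ Y)]
    (hL : Nonempty (X ⟶ Y)) (hR : Nonempty (Y ⟶ X))
    (GX : GrouplikeEnd X k₁) (GY : GrouplikeEnd Y k₂)
    (imax : Fin (k₁ + 1)) (jmax : Fin (k₂ + 1))
    (himax : IsGreatest
      {i : Fin (k₁ + 1) | ∃ (x : X ⟶ Y) (y : Y ⟶ X), x ≫ y = GX.e i} imax)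
    (hjmax : IsGreatest
      {j : Fin (k₂ + 1) | ∃ (x : X ⟶ Y) (y : Y ⟶ X), y ≫ x = GY.e j} jmax) :
    let A' : Set (X ⟶ X) :=
      GX.G ∪ {a | ∃ m : Fin (k₁ + 1), m ≠ 0 ∧ m ≤ imax ∧ a = GX.e m}
    let B' : Set (Y ⟶ Y) :=
      GY.G ∪ {b | ∃ m : Fin (k₂ + 1), m ≠ 0 ∧ m ≤ jmax ∧ b = GY.e m}
    imax.val = jmax.val ∧
    ∃ φ : (X ⟶ X) → (Y ⟶ Y),
      Set.BijOn φ A' B' ∧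
      (∀ a ∈ A', ∀ a' ∈ A', φ (a ≫ a') = φ a ≫ φ a') ∧
      φ (GX.e imax) = GY.e jmax := by
  intro A' B'
  obtain ⟨x₀, y₀, hxy⟩ := himax.1
  obtain ⟨x₁, y₁, hyx⟩ := hjmax.1
  obtain ⟨l, θ, hljm, hil, hbij, hmul, hθδ⟩ :=
    Stmt15Aux.aux GX GY imax jmax x₀ y₀ hxy (fun j hj => hjmax.2 hj)
  obtain ⟨l', θ'', hl'im, hjl', -, -, -⟩ :=
    Stmt15Aux.aux GY GX jmax imax y₁ x₁ hyx (fun i hi => by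
      obtain ⟨x, y, h⟩ := hi
      exact himax.2 ⟨y, x, h⟩)
  have hval : imax.val = jmax.val := by
    have h1 := Fin.le_def.mp hljm
    have h2 := Fin.le_def.mp hl'im
    omega
  have hleq : l = jmax := by
    apply Fin.ext
    have h1 := Fin.le_def.mp hljm
    omega
  rw [hleq] at hbij hθδ
  -- identify the sets
  have hA : A' = {a | GX.e imax ≫ a = a ∧ a ≫ GX.e imax = a} := by
    ext a
    constructor
    · rintro (haG | ⟨m, hm0, hmle, rfl⟩)
      · exact ⟨(GX.idem_comp_mem imax a haG).1, (GX.idem_comp_mem imax a haG).2⟩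
      · exact ⟨(GX.idem_comp_idem m imax hmle).2, (GX.idem_comp_idem m imax hmle).1⟩
    · intro ha
      rcases GX.cover a with haG | ⟨m, hm0, rfl⟩
      · exact Or.inl haG
      · rcases le_total m imax with h | h
        · exact Or.inr ⟨m, hm0, h, rfl⟩
        · have h2' := (GX.idem_comp_idem imax m h).1
          have h3' : GX.e imax = GX.e m := by rw [← ha.1, h2']
          exact Or.inr ⟨m, hm0, le_of_eq (GX.e_injective h3').symm, rfl⟩
  have hB : B' = {b | GY.e jmax ≫ b = b ∧ b ≫ GY.e jmax = b} := by
    ext b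
    constructor
    · rintro (hbG | ⟨m, hm0, hmle, rfl⟩)
      · exact ⟨(GY.idem_comp_mem jmax b hbG).1, (GY.idem_comp_mem jmax b hbG).2⟩
      · exact ⟨(GY.idem_comp_idem m jmax hmle).2, (GY.idem_comp_idem m jmax hmle).1⟩
    · intro hb
      rcases GY.cover b with hbG | ⟨m, hm0, rfl⟩
      · exact Or.inl hbG
      · rcases le_total m jmax with h | h
        · exact Or.inr ⟨m, hm0, h, rfl⟩
        · have h2' := (GY.idem_comp_idem jmax m h).1
          have h3' : GY.e jmax = GY.e m := by rw [← hb.1, h2']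
          exact Or.inr ⟨m, hm0, le_of_eq (GY.e_injective h3').symm, rfl⟩
  refine ⟨hval, θ, ?_, ?_, hθδ⟩
  · rw [hA, hB]
    exact hbij
  · intro a ha a' ha'
    rw [hA] at ha ha'
    exact hmul a ha.1 ha.2 a' ha'.1 ha'.2
end

section
/- Let i = i_max = j_max. Then for all x ∈ L and y ∈ R: x·y = (e_i·x)·(y·e_i) and x·y ∈ G_1 ∪ {e_1,…,e_i}; likewise y·x = (f_i·y)·(x·f_i) and y·x ∈ G_2 ∪ {f_1,…,f_i}. -/
open CategoryTheory

/-- with `i = i_max = j_max`, for all `x ∈ L`, `y ∈ R` one has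
`x·y = (e_i·x)·(y·e_i) ∈ G₁ ∪ {e_1,…,e_i}` and
`y·x = (f_i·y)·(x·f_i) ∈ G₂ ∪ {f_1,…,f_i}`. -/
theorem stmt_16 {C : Type*} [Category C] (X Y : C) (k₁ k₂ : ℕ)
    [Finite (X ⟶ X)] [Finite (X ⟶ Y)] [Finite (Y ⟶ X)] [Finite (Y ⟶ Y)]
    (hL : Nonempty (X ⟶ Y)) (hR : Nonempty (Y ⟶ X))
    (GX : GrouplikeEnd X k₁) (GY : GrouplikeEnd Y k₂)
    (imax : Fin (k₁ + 1)) (jmax : Fin (k₂ + 1))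
    (himax : IsGreatest
      {i : Fin (k₁ + 1) | ∃ (x : X ⟶ Y) (y : Y ⟶ X), x ≫ y = GX.e i} imax)
    (hjmax : IsGreatest
      {j : Fin (k₂ + 1) | ∃ (x : X ⟶ Y) (y : Y ⟶ X), y ≫ x = GY.e j} jmax)
    (heq : imax.val = jmax.val) :
    ∀ (x : X ⟶ Y) (y : Y ⟶ X),
      x ≫ y = (GX.e imax ≫ x) ≫ (y ≫ GX.e imax) ∧
      (x ≫ y ∈ GX.G ∨ ∃ m : Fin (k₁ + 1), m ≠ 0 ∧ m ≤ imax ∧ x ≫ y = GX.e m) ∧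
      y ≫ x = (GY.e jmax ≫ y) ≫ (x ≫ GY.e jmax) ∧
      (y ≫ x ∈ GY.G ∨ ∃ m : Fin (k₂ + 1), m ≠ 0 ∧ m ≤ jmax ∧ y ≫ x = GY.e m) := by
  intro x y
  have hX : x ≫ y ∈ GX.G ∨ ∃ m : Fin (k₁ + 1), m ≠ 0 ∧ m ≤ imax ∧ x ≫ y = GX.e m := by
    rcases GX.cover (x ≫ y) with h | ⟨m, hm0, hm⟩
    · exact Or.inl h
    · exact Or.inr ⟨m, hm0, himax.2 ⟨x, y, hm⟩, hm⟩
  have hY : y ≫ x ∈ GY.G ∨ ∃ m : Fin (k₂ + 1), m ≠ 0 ∧ m ≤ jmax ∧ y ≫ x = GY.e m := by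
    rcases GY.cover (y ≫ x) with h | ⟨m, hm0, hm⟩
    · exact Or.inl h
    · exact Or.inr ⟨m, hm0, hjmax.2 ⟨x, y, hm⟩, hm⟩
  have keyX : GX.e imax ≫ (x ≫ y) = x ≫ y ∧ (x ≫ y) ≫ GX.e imax = x ≫ y := by
    rcases hX with h | ⟨m, hm0, hmle, hm⟩
    · exact GX.idem_comp_mem imax _ h
    · rw [hm]
      obtain ⟨h1, h2⟩ := GX.idem_comp_idem m imax hmle
      exact ⟨h2, h1⟩
  have keyY : GY.e jmax ≫ (y ≫ x) = y ≫ x ∧ (y ≫ x) ≫ GY.e jmax = y ≫ x := by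
    rcases hY with h | ⟨m, hm0, hmle, hm⟩
    · exact GY.idem_comp_mem jmax _ h
    · rw [hm]
      obtain ⟨h1, h2⟩ := GY.idem_comp_idem m jmax hmle
      exact ⟨h2, h1⟩
  refine ⟨?_, hX, ?_, hY⟩
  · have : (GX.e imax ≫ x) ≫ (y ≫ GX.e imax) = x ≫ y := by
      rw [Category.assoc, ← Category.assoc x, keyX.2, keyX.1]
    exact this.symm
  · have : (GY.e jmax ≫ y) ≫ (x ≫ GY.e jmax) = y ≫ x := by
      rw [Category.assoc, ← Category.assoc y, keyY.2, keyY.1]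
    exact this.symm
end

section
/- Let A and B be monoids and let L be a set equipped with a left A-action and a right B-action (so 1_A·x = x, (a·a')·x = a·(a'·x), x·1_B = x, x·(b·b') = (x·b)·b') which commute: (a·x)·b = a·(x·b) for all a ∈ A, b ∈ B, x ∈ L. Suppose there exists x ∈ L such that the map a ↦ a·x is a bijection from A onto L and the map b ↦ x·b is a bijection from B onto L. Then there exists a unique monoid isomorphism φ : A → B such that a·x = x·φ(a) for all a ∈ A. -/
/-- a bimodule over two monoids which is simultaneously free of rank one
as a left module and as a right module (witnessed by a single generator `x`) determines a
unique monoid isomorphism `φ : A ≃* B` with `a·x = x·φ(a)` for all `a`. -/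
theorem stmt_17 {A B L : Type*} [Monoid A] [Monoid B]
    (actL : A → L → L) (actR : L → B → L)
    (one_actL : ∀ z : L, actL 1 z = z)
    (mul_actL : ∀ (a a' : A) (z : L), actL (a * a') z = actL a (actL a' z))
    (actR_one : ∀ z : L, actR z 1 = z)
    (actR_mul : ∀ (z : L) (b b' : B), actR z (b * b') = actR (actR z b) b')
    (hcomm : ∀ (a : A) (z : L) (b : B), actR (actL a z) b = actL a (actR z b))
    (x : L)
    (hxA : Function.Bijective fun a : A => actL a x)
    (hxB : Function.Bijective fun b : B => actR x b) :
    ∃! φ : A ≃* B, ∀ a : A, actL a x = actR x (φ a) := by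
  set eA := Equiv.ofBijective _ hxA with heA
  set eB := Equiv.ofBijective _ hxB with heB
  have hA : ∀ a : A, actL a x = eA a := fun a => rfl
  have hB : ∀ b : B, actR x b = eB b := fun b => rfl
  -- f a is the unique b with x·b = a·x
  set f : A → B := fun a => eB.symm (actL a x) with hf
  set g : B → A := fun b => eA.symm (actR x b) with hg
  have key : ∀ a : A, actR x (f a) = actL a x := fun a => eB.apply_symm_apply _
  have keyg : ∀ b : B, actL (g b) x = actR x b := fun b => eA.apply_symm_apply _
  have left_inv : ∀ a : A, g (f a) = a := by
    intro a
    apply hxA.1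
    show actL (g (f a)) x = actL a x
    rw [keyg, key]
  have right_inv : ∀ b : B, f (g b) = b := by
    intro b
    apply hxB.1
    show actR x (f (g b)) = actR x b
    rw [key, keyg]
  have fmul : ∀ a a' : A, f (a * a') = f a * f a' := by
    intro a a'
    apply hxB.1
    show actR x (f (a * a')) = actR x (f a * f a')
    rw [key, actR_mul, key, mul_actL, ← key a', hcomm, key]
  refine ⟨⟨⟨f, g, left_inv, right_inv⟩, fmul⟩, fun a => (key a).symm, ?_⟩
  intro ψ hψ
  ext a
  apply hxB.1
  show actR x (ψ a) = actR x (f a)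
  rw [key, hψ]
end

section
/- Let C be a category with two objects X and Y such that the hom-sets C(X,Y) and C(Y,X) are nonempty, the endomorphism monoid C(X,X) has exactly 3 elements, and the endomorphism monoid C(Y,Y) is isomorphic as a monoid to C_5. Then C(X,X) is isomorphic as a monoid to C_5. -/
/-!
Put `t = v ≫ u ∈ End Y` for some `u : X ⟶ Y`, `v : Y ⟶ X`. If `t = 1`, then `Y` is a retract of
`X`, so `x ↦ u ≫ x ≫ v` embeds `End Y` into `End X` as a semigroup, and the embedding is onto
because both sides have three elements. Otherwise `t` lies in the group `{e, a}` of `C₅`; since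
`C₅` is commutative and satisfies `x³ = x`, the map `x ↦ u ≫ t x ≫ v` is again a semigroup map
`End Y → End X`, and it still separates `e` from `a` because `v ≫ (u ≫ t x ≫ v) ≫ u = t x`.
Hence the image `b` of `a` satisfies `b³ = b ≠ b²`. If `b² = 1`, then `X` is a retract of `Y` and
we conclude as in the first case; otherwise `End X = {1, b², b}` is a copy of `C₅`.
-/

open CategoryTheory

/-- The three-element monoid `C₅ = {1, e, a}`: the group `ℤ/2 = {e, a}` with a new
identity element `1` adjoined (so `e·e = e`, `a·a = e`, `a·e = e·a = a`). -/
abbrev C5 : Type := WithOne (Multiplicative (ZMod 2))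

namespace C5

instance : Fintype C5 := inferInstanceAs (Fintype (Option (Multiplicative (ZMod 2))))

instance : DecidableEq C5 := inferInstanceAs (DecidableEq (Option (Multiplicative (ZMod 2))))

def a : C5 := (Multiplicative.ofAdd (1 : ZMod 2) : Multiplicative (ZMod 2))

lemma card_eq_three : Nat.card C5 = 3 := by
  rw [Nat.card_eq_fintype_card]; rfl

lemma eq_one_or_eq_a_mul_a_or_eq_a (x : C5) : x = 1 ∨ x = a * a ∨ x = a := by
  revert x; decide

lemma mul_self_mul_self (x : C5) : x * x * x = x := by
  revert x; decide

lemma mul_a_mul_a_ne_mul_a {x : C5} (hx : x ≠ 1) : x * (a * a) ≠ x * a := by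
  revert x; decide

section Recognition

variable {M : Type*} [Monoid M] {b : M}

/-- `{b * b, b}` is a copy of the group `ℤ/2` inside `M`, with identity `b * b`. -/
def semigroupHomOfCube (hb3 : b * b * b = b) : Multiplicative (ZMod 2) →ₙ* M where
  toFun x := if x = 1 then b * b else b
  map_mul' x y := by
    have hbbbb : b * b * (b * b) = b * b := by rw [← mul_assoc, hb3]
    have hbbb : b * (b * b) = b := by rw [← mul_assoc, hb3]
    have hcases : ∀ x : Multiplicative (ZMod 2), x = 1 ∨ x = Multiplicative.ofAdd 1 := by decide
    have hsq : (Multiplicative.ofAdd 1 : Multiplicative (ZMod 2)) * Multiplicative.ofAdd 1 = 1 :=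
      rfl
    have hne : (Multiplicative.ofAdd 1 : Multiplicative (ZMod 2)) ≠ 1 := by decide
    rcases hcases x with rfl | rfl <;> rcases hcases y with rfl | rfl <;>
      simp [hbbbb, hbbb, hb3, hsq, hne]

def monoidHomOfCube (hb3 : b * b * b = b) : C5 →* M := WithOne.lift (semigroupHomOfCube hb3)

lemma monoidHomOfCube_a (hb3 : b * b * b = b) : monoidHomOfCube hb3 a = b := by
  simp [monoidHomOfCube, a, semigroupHomOfCube]

lemma monoidHomOfCube_injective (hb3 : b * b * b = b) (hb2 : b * b ≠ b) (hb1 : b * b ≠ 1) :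
    Function.Injective (monoidHomOfCube hb3) := by
  have hb : b ≠ 1 := fun h => hb1 (by rw [h, one_mul])
  intro x y hxy
  rcases eq_one_or_eq_a_mul_a_or_eq_a x with rfl | rfl | rfl <;>
    rcases eq_one_or_eq_a_mul_a_or_eq_a y with rfl | rfl | rfl <;>
    simp only [map_one, map_mul, monoidHomOfCube_a] at hxy <;>
    first | rfl | exact absurd hxy ‹_› | exact absurd hxy.symm ‹_›

theorem nonempty_mulEquiv_of_card_eq_three (hM : Nat.card M = 3) (hb3 : b * b * b = b)
    (hb2 : b * b ≠ b) (hb1 : b * b ≠ 1) : Nonempty (M ≃* C5) :=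
  have : Finite M := Nat.finite_of_card_ne_zero (hM.trans_ne three_ne_zero)
  ⟨(MulEquiv.ofBijective (monoidHomOfCube hb3)
    ((monoidHomOfCube_injective hb3 hb2 hb1).bijective_of_nat_card_le
      (by rw [hM, card_eq_three]))).symm⟩

end Recognition

end C5

namespace CategoryTheory

variable {C : Type*} [Category C] {X Y : C}

namespace Retract

@[simps]
def endMulHom (h : Retract X Y) : End X →ₙ* End Y where
  toFun x := h.r ≫ x ≫ h.i
  map_mul' x y := by simp [End.mul_def]

lemma endMulHom_injective (h : Retract X Y) : Function.Injective h.endMulHom := by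
  intro x y hxy
  simpa using congrArg (fun z : End Y => h.i ≫ z ≫ h.r) hxy

lemma nonempty_endMulEquiv [Finite (End Y)] (h : Retract X Y)
    (hc : Nat.card (End Y) ≤ Nat.card (End X)) : Nonempty (End X ≃* End Y) :=
  ⟨MulEquiv.ofBijective h.endMulHom (h.endMulHom_injective.bijective_of_nat_card_le hc)⟩

end Retract

lemma comp_comp_mul_comp_comp {u : X ⟶ Y} {v : Y ⟶ X} {t : End Y} (ht : v ≫ u = t)
    (x y : End Y) :
    (show End X from u ≫ x ≫ v) * (show End X from u ≫ y ≫ v) = u ≫ (x * t * y) ≫ v := by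
  simp [End.mul_def, ← ht]

lemma comp_comp_comp_comp {u : X ⟶ Y} {v : Y ⟶ X} {t : End Y} (ht : v ≫ u = t) (x : End Y) :
    v ≫ (u ≫ x ≫ v) ≫ u = t * x * t := by
  simp [End.mul_def, ← ht]

@[simps]
def sandwichMulHom (u : X ⟶ Y) (v : Y ⟶ X) {t : End Y} (ht : v ≫ u = t)
    (hcomm : ∀ x : End Y, Commute t x) (hcube : t * t * t = t) : End Y →ₙ* End X where
  toFun x := u ≫ (t * x) ≫ v
  map_mul' x y := by
    rw [comp_comp_mul_comp_comp ht]
    congr 2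
    calc t * (x * y) = t * t * t * (x * y) := by rw [hcube]
      _ = t * x * t * (t * y) := by simp only [mul_assoc, ← (hcomm x).left_comm]

lemma comp_sandwichMulHom_comp (u : X ⟶ Y) (v : Y ⟶ X) {t : End Y} (ht : v ≫ u = t)
    (hcomm : ∀ x : End Y, Commute t x) (hcube : t * t * t = t) (x : End Y) :
    v ≫ sandwichMulHom u v ht hcomm hcube x ≫ u = t * x := by
  rw [sandwichMulHom_apply, comp_comp_comp_comp ht, ← (hcomm _).eq]
  simp only [← mul_assoc, hcube]

end CategoryTheory

/-- in a category with two objects `X, Y`, nonempty hom-sets in both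
directions, `|C(X,X)| = 3` and `C(Y,Y) ≅ C₅` as a monoid, one also has `C(X,X) ≅ C₅`. -/
theorem stmt_19 {C : Type*} [Category C] (X Y : C)
    (hL : Nonempty (X ⟶ Y)) (hR : Nonempty (Y ⟶ X))
    (hcard : Nat.card (X ⟶ X) = 3)
    (hY : Nonempty (CategoryTheory.End Y ≃* C5)) :
    Nonempty (CategoryTheory.End X ≃* C5) := by
  obtain ⟨u⟩ := hL
  obtain ⟨v⟩ := hR
  obtain ⟨φ⟩ := hY
  have hcardY : Nat.card (End Y) = 3 := (Nat.card_congr φ.toEquiv).trans C5.card_eq_three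
  have : Finite (End Y) := Nat.finite_of_card_ne_zero (hcardY.trans_ne three_ne_zero)
  by_cases hvu : v ≫ u = 𝟙 Y
  · have : Finite (End X) := Nat.finite_of_card_ne_zero (hcard.trans_ne three_ne_zero)
    obtain ⟨ψ⟩ := (Retract.mk v u hvu).nonempty_endMulEquiv (hcard.trans hcardY.symm).le
    exact ⟨ψ.symm.trans φ⟩
  set t : End Y := v ≫ u with ht
  have hcomm (x : End Y) : Commute t x := by simpa using (Commute.all (φ t) (φ x)).map φ.symm
  have hcube : t * t * t = t := φ.injective (by simp only [map_mul, C5.mul_self_mul_self])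
  set a := φ.symm C5.a
  set ψ := sandwichMulHom u v ht.symm hcomm hcube
  have hsq_ne : ψ a * ψ a ≠ ψ a := by
    rw [← map_mul]
    intro h
    have hconj : t * (a * a) = t * a := by
      simpa only [ψ, comp_sandwichMulHom_comp] using congrArg (fun z : End X => v ≫ z ≫ u) h
    exact C5.mul_a_mul_a_ne_mul_a ((map_ne_one_iff φ φ.injective).2 hvu)
      (by simpa only [map_mul, a, MulEquiv.apply_symm_apply] using congrArg φ hconj)
  by_cases hsq : ψ a * ψ a = 1
  · have hretract : (u ≫ (t * (a * a))) ≫ v = 𝟙 X := by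
      rw [Category.assoc]; exact (map_mul ψ a a).trans hsq
    obtain ⟨ψ'⟩ := (Retract.mk _ _ hretract).nonempty_endMulEquiv (hcardY.trans hcard.symm).le
    exact ⟨ψ'.trans φ⟩
  · exact C5.nonempty_mulEquiv_of_card_eq_three hcard
      (by simp only [← map_mul, a, C5.mul_self_mul_self]) hsq_ne hsq
end
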